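/- arXiv:math/9210205 — 7 statements merged into one kernel-verified Lean document; each statement's English description precedes it below -/
import Mathlib

section
/- Let (b_j) be a weak-Cauchy basic sequence in a Banach space whose closed linear span admits a summing functional s (i.e., s(∑ c_j b_j) = ∑ c_j for all norm-convergent expansions), and let (e_j) be the difference sequence e_1 = b_1, e_j = b_j - b_{j-1} for j > 1. Then (e_j) is a basic sequence, with basis constant at most λ + (1+λ)||s|| sup_k ||b_k||, where λ is the basis constant of (b_j). -/
open Filter Finset

section Defs

variable {X : Type*} [NormedAddCommGroup X] [NormedSpace ℝ X]

/-- A sequence is weak-Cauchy if `f (b n)` converges for every continuous functional `f`. -/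
def WeakCauchy (b : ℕ → X) : Prop :=
  ∀ f : X →L[ℝ] ℝ, ∃ L : ℝ, Tendsto (fun n => f (b n)) atTop (nhds L)

/-- Weak convergence of a sequence to a point. -/
def WeakConvTo (b : ℕ → X) (x : X) : Prop :=
  ∀ f : X →L[ℝ] ℝ, Tendsto (fun n => f (b n)) atTop (nhds (f x))

/-- A non-trivial weak-Cauchy sequence: weak-Cauchy but not weakly convergent. -/
def NontrivialWeakCauchy (b : ℕ → X) : Prop :=
  WeakCauchy b ∧ ¬ ∃ x : X, WeakConvTo b x

/-- `b` is a basic sequence with basis constant at most `C`: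
the basis projections on the linear span have norm at most `C`. -/
def IsBasicWithConst (C : ℝ) (b : ℕ → X) : Prop :=
  1 ≤ C ∧ (∀ j, b j ≠ 0) ∧
    ∀ (c : ℕ → ℝ) (m n : ℕ), m ≤ n →
      ‖∑ j ∈ Finset.range m, c j • b j‖ ≤ C * ‖∑ j ∈ Finset.range n, c j • b j‖

/-- A basic sequence. -/
def IsBasic (b : ℕ → X) : Prop := ∃ C : ℝ, IsBasicWithConst C b

/-- The partial sums `∑_{j<n} c j • b j` are norm-bounded. -/
def BoundedPartialSums (c : ℕ → ℝ) (b : ℕ → X) : Prop :=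
  ∃ M : ℝ, ∀ n, ‖∑ j ∈ Finset.range n, c j • b j‖ ≤ M

/-- A strongly summing (s.s.) sequence: weak-Cauchy basic, and whenever the
partial sums `∑ c j • b j` are bounded, `∑ c j` converges. -/
def StronglySumming (b : ℕ → X) : Prop :=
  WeakCauchy b ∧ IsBasic b ∧
    ∀ c : ℕ → ℝ, BoundedPartialSums c b →
      ∃ L : ℝ, Tendsto (fun n => ∑ j ∈ Finset.range n, c j) atTop (nhds L)

/-- `b` dominates the summing basis. -/
def DominatesSummingBasis (b : ℕ → X) : Prop :=
  ∃ β : ℝ, ∀ (c : ℕ → ℝ) (n : ℕ),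
    |∑ j ∈ Finset.range n, c j| ≤ β * ‖∑ j ∈ Finset.range n, c j • b j‖

/-- An (s)-sequence: a weak-Cauchy basic sequence dominating the summing basis. -/
def IsSSeq (b : ℕ → X) : Prop := WeakCauchy b ∧ IsBasic b ∧ DominatesSummingBasis b

/-- Semi-normalized sequence. -/
def SemiNormalized (b : ℕ → X) : Prop :=
  ∃ a A : ℝ, 0 < a ∧ ∀ j, a ≤ ‖b j‖ ∧ ‖b j‖ ≤ A

/-- The sequence of partial sums. -/
def partialSums (e : ℕ → X) : ℕ → X := fun n => ∑ j ∈ Finset.range n, e j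

/-- A (c)-sequence: a semi-normalized basic sequence whose partial sums are weak-Cauchy. -/
def IsCSeq (e : ℕ → X) : Prop := SemiNormalized e ∧ IsBasic e ∧ WeakCauchy (partialSums e)

/-- A (c.c.)-sequence: a basic sequence with weak-Cauchy partial sums such that
boundedness of `∑ c j • e j` forces the scalar sequence `c` to converge. -/
def IsCC (e : ℕ → X) : Prop :=
  IsBasic e ∧ WeakCauchy (partialSums e) ∧
    ∀ c : ℕ → ℝ, BoundedPartialSums c e → ∃ L : ℝ, Tendsto c atTop (nhds L)

/-- The difference sequence `e 0 = b 0`, `e j = b j - b (j-1)`. -/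
def diffSeq (b : ℕ → X) : ℕ → X := fun j => if j = 0 then b 0 else b j - b (j - 1)

/-- `y` is a convex block basis of `x`. -/
def ConvexBlockBasis (y x : ℕ → X) : Prop :=
  ∃ (n : ℕ → ℕ) (l : ℕ → ℝ), StrictMono n ∧ (∀ i, 0 ≤ l i) ∧
    ∀ j, (∑ i ∈ Finset.Ioc (n j) (n (j + 1)), l i) = 1 ∧
      y j = ∑ i ∈ Finset.Ioc (n j) (n (j + 1)), l i • x i

/-- The norm, in the space `Se` of convergent series, of the finitely supported
sequence `(c 0, …, c n, 0, …)`: the sup of absolute values of its partial sums. -/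
noncomputable def sbNorm (c : ℕ → ℝ) (n : ℕ) : ℝ :=
  (Finset.range (n + 2)).sup' ⟨0, Finset.mem_range.mpr (Nat.succ_pos _)⟩
    (fun m => |∑ j ∈ Finset.range m, c j|)

/-- `b` is equivalent to the summing basis (the unit vector basis of `Se ≅ c₀`). -/
def EquivSummingBasis (b : ℕ → X) : Prop :=
  ∃ A B : ℝ, 0 < A ∧ ∀ (c : ℕ → ℝ) (n : ℕ),
    A * sbNorm c n ≤ ‖∑ j ∈ Finset.range (n + 1), c j • b j‖ ∧
    ‖∑ j ∈ Finset.range (n + 1), c j • b j‖ ≤ B * sbNorm c n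

/-- Weakly unconditionally Cauchy sequence. -/
def WUC (x : ℕ → X) : Prop := ∀ f : X →L[ℝ] ℝ, Summable (fun j => |f (x j)|)

/-- DUC: the difference sequence is WUC. -/
def DUC (b : ℕ → X) : Prop := WUC (diffSeq b)

/-- The WUC "norm" `sup { ∑ |f (x j)| : ‖f‖ ≤ 1 }`. -/
noncomputable def wucNorm (x : ℕ → X) : ℝ :=
  sSup {r : ℝ | ∃ f : X →L[ℝ] ℝ, ‖f‖ ≤ 1 ∧ HasSum (fun j => |f (x j)|) r}

/-- The DUC "norm" of a sequence. -/
noncomputable def ducNorm (b : ℕ → X) : ℝ := wucNorm (diffSeq b)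

/-- A boundedly complete sequence. -/
def BoundedlyComplete (b : ℕ → X) : Prop :=
  ∀ c : ℕ → ℝ, BoundedPartialSums c b →
    ∃ x : X, Tendsto (fun n => ∑ j ∈ Finset.range n, c j • b j) atTop (nhds x)

/-- A skipped boundedly complete sequence. -/
def SkippedBoundedlyComplete (e : ℕ → X) : Prop :=
  ∀ c : ℕ → ℝ, (∀ N, ∃ j ≥ N, c j = 0) → BoundedPartialSums c e →
    ∃ x : X, Tendsto (fun n => ∑ j ∈ Finset.range n, c j • e j) atTop (nhds x)

/-- An ε-(c.c.) sequence. -/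
def IsEpsCC (ε : ℝ) (e : ℕ → X) : Prop :=
  IsCSeq e ∧ ∀ c : ℕ → ℝ, (∀ N, ∃ j ≥ N, c j = 0) →
    (∀ n, ‖∑ j ∈ Finset.range n, c j • e j‖ ≤ 1) →
    Filter.limsup (fun j => |c j|) atTop < ε

end Defs

lemma diff_key {X : Type*} [NormedAddCommGroup X] [NormedSpace ℝ X]
    (b : ℕ → X) (c : ℕ → ℝ) (n : ℕ) :
    ∑ j ∈ Finset.range (n + 1), c j • diffSeq b j
      = (∑ j ∈ Finset.range n, (c j - c (j + 1)) • b j) + c n • b n := by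
  induction n with
  | zero => simp [diffSeq]
  | succ n ih =>
    rw [Finset.sum_range_succ, ih, Finset.sum_range_succ]
    simp only [diffSeq, Nat.succ_ne_zero, if_false, Nat.add_sub_cancel, sub_smul, smul_sub]
    abel

/-- difference sequence of a weak-Cauchy basic sequence with a summing
functional is basic, with the stated basis constant. -/
theorem stmt1 {X : Type*} [NormedAddCommGroup X] [NormedSpace ℝ X] [CompleteSpace X]
    (b : ℕ → X) (lam : ℝ) (hwc : WeakCauchy b) (hb : IsBasicWithConst lam b)
    (s : X →L[ℝ] ℝ)
    (hs : ∀ (c : ℕ → ℝ) (x : X),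
      Filter.Tendsto (fun n => ∑ j ∈ Finset.range n, c j • b j) Filter.atTop (nhds x) →
      Filter.Tendsto (fun n => ∑ j ∈ Finset.range n, c j) Filter.atTop (nhds (s x))) :
    IsBasicWithConst (lam + (1 + lam) * ‖s‖ * (⨆ k, ‖b k‖)) (diffSeq b) := by
  obtain ⟨hlam, hbne, hproj⟩ := hb
  have hlam0 : (0:ℝ) ≤ lam := le_trans zero_le_one hlam
  -- boundedness of (b k) via Banach-Steinhaus
  have hbdd : BddAbove (Set.range fun k => ‖b k‖) := by
    set g : ℕ → (X →L[ℝ] ℝ) →L[ℝ] ℝ :=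
      fun k => NormedSpace.inclusionInDoubleDualLi ℝ (b k) with hg
    have h : ∀ f : X →L[ℝ] ℝ, ∃ C, ∀ k, ‖g k f‖ ≤ C := by
      intro f
      obtain ⟨L, hL⟩ := hwc f
      obtain ⟨C, hC⟩ := hL.norm.bddAbove_range
      refine ⟨C, fun k => ?_⟩
      have : ‖f (b k)‖ ≤ C := hC ⟨k, rfl⟩
      simpa [hg, NormedSpace.inclusionInDoubleDualLi, NormedSpace.dual_def] using this
    obtain ⟨C', hC'⟩ := banach_steinhaus h
    refine ⟨C', ?_⟩
    rintro _ ⟨k, rfl⟩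
    have := hC' k
    rwa [hg, (NormedSpace.inclusionInDoubleDualLi ℝ).norm_map] at this
  set B := ⨆ k, ‖b k‖ with hBdef
  have hB : ∀ k, ‖b k‖ ≤ B := fun k => le_ciSup hbdd k
  have hB0 : 0 ≤ B := le_trans (norm_nonneg _) (hB 0)
  have hC1 : 1 ≤ lam + (1 + lam) * ‖s‖ * B := by nlinarith [norm_nonneg s, mul_nonneg (mul_nonneg (by linarith : (0:ℝ) ≤ 1+lam) (norm_nonneg s)) hB0]
  -- the summing functional on finite sums
  have hsf : ∀ (a : ℕ → ℝ) (k : ℕ),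
      s (∑ j ∈ Finset.range k, a j • b j) = ∑ j ∈ Finset.range k, a j := by
    intro a k
    set a' : ℕ → ℝ := fun j => if j < k then a j else 0 with ha'
    have hconst : ∀ N, k ≤ N →
        ∑ j ∈ Finset.range N, a' j • b j = ∑ j ∈ Finset.range k, a j • b j := by
      intro N hN
      rw [← Finset.sum_range_add_sum_Ico _ hN]
      have h1 : ∑ j ∈ Finset.range k, a' j • b j = ∑ j ∈ Finset.range k, a j • b j :=
        Finset.sum_congr rfl (fun j hj => by
          simp [ha', Finset.mem_range.mp hj])
      have h2 : ∑ j ∈ Finset.Ico k N, a' j • b j = 0 :=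
        Finset.sum_eq_zero (fun j hj => by
          simp [ha', not_lt.mpr (Finset.mem_Ico.mp hj).1])
      rw [h1, h2, add_zero]
    have hconst' : ∀ N, k ≤ N →
        ∑ j ∈ Finset.range N, a' j = ∑ j ∈ Finset.range k, a j := by
      intro N hN
      rw [← Finset.sum_range_add_sum_Ico _ hN]
      have h1 : ∑ j ∈ Finset.range k, a' j = ∑ j ∈ Finset.range k, a j :=
        Finset.sum_congr rfl (fun j hj => by simp [ha', Finset.mem_range.mp hj])
      have h2 : ∑ j ∈ Finset.Ico k N, a' j = 0 :=
        Finset.sum_eq_zero (fun j hj => by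
          simp [ha', not_lt.mpr (Finset.mem_Ico.mp hj).1])
      rw [h1, h2, add_zero]
    have hx : Tendsto (fun N => ∑ j ∈ Finset.range N, a' j • b j) atTop
        (nhds (∑ j ∈ Finset.range k, a j • b j)) :=
      tendsto_atTop_of_eventually_const hconst
    have h1 := hs a' _ hx
    have h2 : Tendsto (fun N => ∑ j ∈ Finset.range N, a' j) atTop
        (nhds (∑ j ∈ Finset.range k, a j)) :=
      tendsto_atTop_of_eventually_const hconst'
    exact tendsto_nhds_unique h1 h2
  refine ⟨hC1, ?_, ?_⟩
  · intro j
    match j with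
    | 0 => simpa [diffSeq] using hbne 0
    | (j+1) =>
      simp only [diffSeq, Nat.succ_ne_zero, if_false, Nat.add_sub_cancel]
      intro h
      have heq : b (j+1) = b j := sub_eq_zero.mp h
      set c : ℕ → ℝ := fun i => if i = j then 1 else if i = j+1 then -1 else 0 with hc
      have h1 : ∑ i ∈ Finset.range (j+1), c i • b i = b j := by
        rw [Finset.sum_eq_single j]
        · simp [hc]
        · intro i hi hij
          have hi' : i ≠ j + 1 := by
            have := Finset.mem_range.mp hi; omega
          simp [hc, hij, hi']
        · intro hnot; exact absurd (Finset.self_mem_range_succ j) hnot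
      have h2 : ∑ i ∈ Finset.range (j+2), c i • b i = 0 := by
        rw [Finset.sum_range_succ, h1]
        simp [hc, heq]
      have := hproj c (j+1) (j+2) (by omega)
      rw [h1, h2] at this
      simp only [norm_zero, mul_zero] at this
      exact hbne j (norm_le_zero_iff.mp this)
  · intro c m n hmn
    match m, n, hmn with
    | 0, n, _ =>
      simp only [Finset.range_zero, Finset.sum_empty, norm_zero]
      have h0 : (0:ℝ) ≤ lam + (1 + lam) * ‖s‖ * B := le_trans zero_le_one hC1
      exact mul_nonneg h0 (norm_nonneg _)
    | (m'+1), (n'+1), hmn =>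
      have hmn' : m' ≤ n' := Nat.succ_le_succ_iff.mp hmn
      set a : ℕ → ℝ := fun j => if j = n' then c n' else c j - c (j+1) with ha
      have h1 : ∑ j ∈ Finset.range (n'+1), c j • diffSeq b j
          = ∑ j ∈ Finset.range (n'+1), a j • b j := by
        rw [diff_key, Finset.sum_range_succ]
        congr 1
        · exact Finset.sum_congr rfl (fun j hj => by
            have : j ≠ n' := Nat.ne_of_lt (Finset.mem_range.mp hj)
            simp [ha, this])
        · simp [ha]
      have hPd : ∑ j ∈ Finset.range m', a j • b j
          = ∑ j ∈ Finset.range m', (c j - c (j+1)) • b j :=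
        Finset.sum_congr rfl (fun j hj => by
          have : j ≠ n' := Nat.ne_of_lt (lt_of_lt_of_le (Finset.mem_range.mp hj) hmn')
          simp [ha, this])
      have h2 : ∑ j ∈ Finset.range (m'+1), c j • diffSeq b j
          = (∑ j ∈ Finset.range m', a j • b j) + c m' • b m' := by
        rw [diff_key, hPd]
      have h3 : ‖∑ j ∈ Finset.range m', a j • b j‖
          ≤ lam * ‖∑ j ∈ Finset.range (n'+1), c j • diffSeq b j‖ := by
        rw [h1]
        exact hproj a m' (n'+1) (by omega)
      have h4 : s (∑ j ∈ Finset.range (n'+1), c j • diffSeq b j) = c 0 := by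
        rw [h1, hsf, Finset.sum_range_succ]
        have : ∑ j ∈ Finset.range n', a j = ∑ j ∈ Finset.range n', (c j - c (j+1)) :=
          Finset.sum_congr rfl (fun j hj => by
            have : j ≠ n' := Nat.ne_of_lt (Finset.mem_range.mp hj)
            simp [ha, this])
        rw [this, Finset.sum_range_sub' c n']
        simp [ha]
      have h5 : s (∑ j ∈ Finset.range m', a j • b j) = c 0 - c m' := by
        rw [hsf]
        have : ∑ j ∈ Finset.range m', a j = ∑ j ∈ Finset.range m', (c j - c (j+1)) :=
          Finset.sum_congr rfl (fun j hj => by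
            have : j ≠ n' := Nat.ne_of_lt (lt_of_lt_of_le (Finset.mem_range.mp hj) hmn')
            simp [ha, this])
        rw [this, Finset.sum_range_sub' c m']
      have h6 : c m' = s (∑ j ∈ Finset.range (n'+1), c j • diffSeq b j)
          - s (∑ j ∈ Finset.range m', a j • b j) := by
        rw [h4, h5]; ring
      have h7 : |c m'| ≤ ‖s‖ * ‖∑ j ∈ Finset.range (n'+1), c j • diffSeq b j‖
          + ‖s‖ * (lam * ‖∑ j ∈ Finset.range (n'+1), c j • diffSeq b j‖) := by
        rw [h6]
        refine le_trans (abs_sub _ _) (add_le_add ?_ ?_)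
        · exact s.le_opNorm _
        · exact le_trans (s.le_opNorm _)
            (mul_le_mul_of_nonneg_left h3 (norm_nonneg s))
      calc ‖∑ j ∈ Finset.range (m'+1), c j • diffSeq b j‖
          = ‖(∑ j ∈ Finset.range m', a j • b j) + c m' • b m'‖ := by rw [h2]
        _ ≤ ‖∑ j ∈ Finset.range m', a j • b j‖ + |c m'| * ‖b m'‖ := by
            refine le_trans (norm_add_le _ _) ?_
            rw [norm_smul, Real.norm_eq_abs]
        _ ≤ lam * ‖∑ j ∈ Finset.range (n'+1), c j • diffSeq b j‖
            + (‖s‖ * ‖∑ j ∈ Finset.range (n'+1), c j • diffSeq b j‖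
              + ‖s‖ * (lam * ‖∑ j ∈ Finset.range (n'+1), c j • diffSeq b j‖)) * B := by
            refine add_le_add h3 ?_
            refine mul_le_mul h7 (hB m') (norm_nonneg _) ?_
            have hnn := norm_nonneg (∑ j ∈ Finset.range (n'+1), c j • diffSeq b j)
            positivity
        _ = (lam + (1 + lam) * ‖s‖ * B)
            * ‖∑ j ∈ Finset.range (n'+1), c j • diffSeq b j‖ := by ring
end

section
/- Let (b_j) be a sequence in a Banach space and (e_j) its difference sequence (e_1 = b_1, e_j = b_j - b_{j-1} for j > 1). Then (b_j) is an (s)-sequence if and only if (e_j) is a (c)-sequence. -/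
open Filter Finset

section Aux

variable {X : Type*} [NormedAddCommGroup X] [NormedSpace ℝ X]

lemma ps_diff (b : ℕ → X) (n : ℕ) : partialSums (diffSeq b) (n + 1) = b n := by
  induction n with
  | zero => simp [partialSums, diffSeq]
  | succ k ih =>
      rw [partialSums, Finset.sum_range_succ]
      rw [partialSums] at ih
      rw [ih]
      simp [diffSeq]

lemma abel_id (b : ℕ → X) (c : ℕ → ℝ) (n : ℕ) :
    ∑ j ∈ range (n + 1), c j • diffSeq b j
      = ∑ j ∈ range (n + 1), (c j - c (j + 1)) • b j + c (n + 1) • b n := by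
  induction n with
  | zero => simp [diffSeq]; module
  | succ k ih =>
      have hd : diffSeq b (k + 1) = b (k + 1) - b k := by simp [diffSeq]
      conv_rhs => rw [Finset.sum_range_succ]
      rw [Finset.sum_range_succ, ih, hd]
      module

lemma sum_eq_diff (b : ℕ → X) (c : ℕ → ℝ) (n : ℕ) :
    ∑ j ∈ range n, c j • b j
      = ∑ i ∈ range n, (∑ j ∈ Finset.Ico i n, c j) • diffSeq b i := by
  cases n with
  | zero => simp
  | succ k =>
      set D : ℕ → ℝ := fun i => ∑ j ∈ Finset.Ico i (k + 1), c j with hD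
      have h1 : ∀ j ∈ range (k + 1), (D j - D (j + 1)) • b j = c j • b j := by
        intro j hj
        have hj' : j < k + 1 := Finset.mem_range.mp hj
        have : D j = c j + D (j + 1) := Finset.sum_eq_sum_Ico_succ_bot hj' c
        rw [this]; ring_nf
      have h2 : D (k + 1) = 0 := by simp [hD]
      rw [abel_id b D k, h2, Finset.sum_congr rfl h1]
      simp

lemma wc_bounded (b : ℕ → X) (h : WeakCauchy b) : ∃ M : ℝ, ∀ n, ‖b n‖ ≤ M := by
  have key : ∀ f : X →L[ℝ] ℝ, ∃ C, ∀ n,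
      ‖(NormedSpace.inclusionInDoubleDual ℝ X (b n)) f‖ ≤ C := by
    intro f
    obtain ⟨L, hL⟩ := h f
    obtain ⟨C, hC⟩ := hL.norm.bddAbove_range
    exact ⟨C, fun n => hC (Set.mem_range_self n)⟩
  obtain ⟨C', hC'⟩ := banach_steinhaus key
  refine ⟨C', fun n => ?_⟩
  have heq : ‖b n‖ = ‖(NormedSpace.inclusionInDoubleDual ℝ X) (b n)‖ :=
    ((NormedSpace.inclusionInDoubleDualLi ℝ (E := X)).norm_map (b n)).symm
  rw [heq]; exact hC' n

lemma forward_dir (b : ℕ → X) (h : IsSSeq b) : IsCSeq (diffSeq b) := by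
  obtain ⟨hWC, ⟨C, hC1, hbne, hproj⟩, ⟨β, hβ⟩⟩ := h
  obtain ⟨M, hM⟩ := wc_bounded b hWC
  have hM0 : 0 ≤ M := le_trans (norm_nonneg _) (hM 0)
  have hb0 : (1 : ℝ) ≤ β * ‖b 0‖ := by
    have := hβ (fun _ => 1) 1
    simpa using this
  have hβpos : 0 < β := by
    rcases le_or_gt β 0 with hle | hlt
    · nlinarith [norm_nonneg (b 0)]
    · exact hlt
  have hβC : 0 < β * C := by nlinarith
  -- lower bound for the difference sequence
  have hlow : ∀ j, 1 / (β * C) ≤ ‖diffSeq b j‖ := by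
    intro j
    rw [div_le_iff₀ hβC]
    cases j with
    | zero =>
        have : diffSeq b 0 = b 0 := by simp [diffSeq]
        rw [this]
        nlinarith [norm_nonneg (b 0)]
    | succ m =>
        set c : ℕ → ℝ := fun i => if i = m + 1 then 1 else if i = m then (-1 : ℝ) else 0
          with hc
        have hs1 : ∑ i ∈ range (m + 1), c i • b i = (-1 : ℝ) • b m := by
          have h1 : ∀ i ∈ range (m + 1), c i • b i
              = if i = m then (-1 : ℝ) • b m else 0 := by
            intro i hi
            have hi' : i < m + 1 := Finset.mem_range.mp hi
            by_cases him : i = m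
            · subst him; simp [hc]
            · have : i ≠ m + 1 := by omega
              simp [hc, this, him]
          rw [Finset.sum_congr rfl h1, Finset.sum_ite_eq' (range (m + 1)) m
            (fun _ => (-1 : ℝ) • b m)]
          simp
        have hs2 : ∑ i ∈ range (m + 2), c i • b i = diffSeq b (m + 1) := by
          rw [Finset.sum_range_succ, hs1]
          have : c (m + 1) = 1 := by simp [hc]
          rw [this]
          simp [diffSeq]
          abel
        have hd1 : (1 : ℝ) ≤ β * ‖∑ i ∈ range (m + 1), c i • b i‖ := by
          have := hβ c (m + 1)
          have hsum : ∑ i ∈ range (m + 1), c i = -1 := by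
            have h1 : ∀ i ∈ range (m + 1), c i = if i = m then (-1 : ℝ) else 0 := by
              intro i hi
              have hi' : i < m + 1 := Finset.mem_range.mp hi
              by_cases him : i = m
              · subst him; simp [hc]
              · have : i ≠ m + 1 := by omega
                simp [hc, this, him]
            rw [Finset.sum_congr rfl h1, Finset.sum_ite_eq' (range (m + 1)) m
              (fun _ => (-1 : ℝ))]
            simp
          rw [hsum] at this
          simpa using this
        have hd2 : ‖∑ i ∈ range (m + 1), c i • b i‖
            ≤ C * ‖∑ i ∈ range (m + 2), c i • b i‖ :=
          hproj c (m + 1) (m + 2) (by omega)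
        rw [hs2] at hd2
        nlinarith [norm_nonneg (∑ i ∈ range (m + 1), c i • b i)]
  have hlowpos : 0 < 1 / (β * C) := by positivity
  refine ⟨⟨1 / (β * C), 2 * M, hlowpos, fun j => ⟨hlow j, ?_⟩⟩, ?_, ?_⟩
  · -- upper bound
    cases j with
    | zero =>
        have : diffSeq b 0 = b 0 := by simp [diffSeq]
        rw [this]; nlinarith [hM 0]
    | succ m =>
        have : diffSeq b (m + 1) = b (m + 1) - b m := by simp [diffSeq]
        rw [this]
        calc ‖b (m + 1) - b m‖ ≤ ‖b (m + 1)‖ + ‖b m‖ := norm_sub_le _ _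
          _ ≤ 2 * M := by nlinarith [hM (m + 1), hM m]
  · -- basic
    refine ⟨C + 2 * β * C * M, ⟨by nlinarith, fun j => ?_, ?_⟩⟩
    · -- diffSeq b j ≠ 0
      intro h0
      have := hlow j
      rw [h0, norm_zero] at this
      linarith
    · intro c m n hmn
      set Tn := ‖∑ j ∈ range n, c j • diffSeq b j‖ with hTndef
      have hTn0 : 0 ≤ Tn := norm_nonneg _
      rcases Nat.eq_zero_or_pos m with hm0 | hm1
      · subst hm0
        simp only [range_zero, Finset.sum_empty, norm_zero]
        nlinarith [mul_nonneg (mul_nonneg hβC.le hM0) hTn0,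
          mul_nonneg (sub_nonneg.mpr hC1) hTn0, hTn0]
      rcases eq_or_lt_of_le hmn with hmeq | hmlt
      · subst hmeq
        rw [← hTndef]
        nlinarith [mul_nonneg (mul_nonneg hβC.le hM0) hTn0,
          mul_nonneg (sub_nonneg.mpr hC1) hTn0]
      -- now 1 ≤ m < n
      set c'' : ℕ → ℝ := fun j => if j + 1 = n then c j else c j - c (j + 1) with hc''
      have hTneq : ∑ j ∈ range n, c'' j • b j = ∑ j ∈ range n, c j • diffSeq b j := by
        obtain ⟨k, rfl⟩ : ∃ k, n = k + 1 := ⟨n - 1, by omega⟩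
        rw [abel_id b c k]
        conv_lhs => rw [Finset.sum_range_succ]
        conv_rhs => rw [Finset.sum_range_succ]
        have h1 : ∀ j ∈ range k, c'' j • b j = (c j - c (j + 1)) • b j := by
          intro j hj
          have hjk : j ≠ k := by have := Finset.mem_range.mp hj; omega
          simp [hc'', hjk]
        rw [Finset.sum_congr rfl h1]
        have h2 : c'' k = c k := by simp [hc'']
        rw [h2]; module
      have hps : ∀ k, k ≤ n → |∑ j ∈ range k, c'' j| ≤ β * (C * Tn) := by
        intro k hk
        calc |∑ j ∈ range k, c'' j| ≤ β * ‖∑ j ∈ range k, c'' j • b j‖ := hβ c'' k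
          _ ≤ β * (C * ‖∑ j ∈ range n, c'' j • b j‖) :=
              mul_le_mul_of_nonneg_left (hproj c'' k n hk) hβpos.le
          _ = β * (C * Tn) := by rw [hTneq]
      have htel : ∀ k, k < n → ∑ j ∈ range k, c'' j = c 0 - c k := by
        intro k hk
        have h1 : ∀ j ∈ range k, c'' j = c j - c (j + 1) := by
          intro j hj
          have : j + 1 ≠ n := by have := Finset.mem_range.mp hj; omega
          simp [hc'', this]
        rw [Finset.sum_congr rfl h1, Finset.sum_range_sub' c k]
      have htn : ∑ j ∈ range n, c'' j = c 0 := by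
        obtain ⟨k, rfl⟩ : ∃ k, n = k + 1 := ⟨n - 1, by omega⟩
        rw [Finset.sum_range_succ, htel k (by omega)]
        have : c'' k = c k := by simp [hc'']
        rw [this]; ring
      have hc0 : |c 0| ≤ β * (C * Tn) := by
        have := hps n le_rfl
        rwa [htn] at this
      have hck : ∀ k, k < n → |c k| ≤ 2 * (β * (C * Tn)) := by
        intro k hk
        have h1 := hps k hk.le
        rw [htel k hk] at h1
        have h2 : |c k| ≤ |c 0| + |c 0 - c k| := by
          calc |c k| = |c 0 - (c 0 - c k)| := by congr 1; ring
            _ ≤ |c 0| + |c 0 - c k| := abs_sub _ _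
        nlinarith
      -- decompose the m-partial sum
      obtain ⟨m', rfl⟩ : ∃ m', m = m' + 1 := ⟨m - 1, by omega⟩
      have hTm : ∑ j ∈ range (m' + 1), c j • diffSeq b j
          = ∑ j ∈ range (m' + 1), c'' j • b j + c (m' + 1) • b m' := by
        rw [abel_id b c m']
        congr 1
        refine Finset.sum_congr rfl fun j hj => ?_
        have hj' : j < m' + 1 := Finset.mem_range.mp hj
        have : j + 1 ≠ n := by omega
        simp [hc'', this]
      rw [hTm]
      have e1 : ‖∑ j ∈ range (m' + 1), c'' j • b j + c (m' + 1) • b m'‖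
          ≤ ‖∑ j ∈ range (m' + 1), c'' j • b j‖ + |c (m' + 1)| * ‖b m'‖ := by
        calc _ ≤ ‖∑ j ∈ range (m' + 1), c'' j • b j‖ + ‖c (m' + 1) • b m'‖ :=
              norm_add_le _ _
          _ = _ := by rw [norm_smul, Real.norm_eq_abs]
      have e2 : ‖∑ j ∈ range (m' + 1), c'' j • b j‖ ≤ C * Tn := by
        have := hproj c'' (m' + 1) n hmn
        rwa [hTneq] at this
      have e3 : |c (m' + 1)| ≤ 2 * (β * (C * Tn)) := hck (m' + 1) hmlt
      have e4 : ‖b m'‖ ≤ M := hM m'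
      have e5 : |c (m' + 1)| * ‖b m'‖ ≤ 2 * (β * (C * Tn)) * M := by
        apply mul_le_mul e3 e4 (norm_nonneg _)
        nlinarith
      calc ‖∑ j ∈ range (m' + 1), c'' j • b j + c (m' + 1) • b m'‖
          ≤ C * Tn + 2 * (β * (C * Tn)) * M := by linarith
        _ = (C + 2 * β * C * M) * Tn := by ring
  · -- WeakCauchy (partialSums (diffSeq b))
    intro f
    obtain ⟨L, hL⟩ := hWC f
    refine ⟨L, ?_⟩
    have h1 : Tendsto (fun n => f (partialSums (diffSeq b) (n + 1))) atTop (nhds L) := by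
      apply hL.congr
      intro n
      rw [ps_diff]
    exact (tendsto_add_atTop_iff_nat 1).mp h1

lemma backward_dir (b : ℕ → X) (h : IsCSeq (diffSeq b)) : IsSSeq b := by
  obtain ⟨⟨a, A, hapos, hsA⟩, ⟨Ce, hCe1, hene, heproj⟩, hWCp⟩ := h
  obtain ⟨M, hM'⟩ := wc_bounded _ hWCp
  have hM : ∀ n, ‖b n‖ ≤ M := by
    intro n
    have := hM' (n + 1)
    rwa [ps_diff] at this
  have hM0 : 0 ≤ M := le_trans (norm_nonneg _) (hM 0)
  have hbn : ∀ (d : ℕ → ℝ) (k : ℕ),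
      ∑ i ∈ range k, d i • diffSeq b i = ∑ j ∈ range k, d j • diffSeq b j := fun _ _ => rfl
  -- b j ≠ 0
  have hbne : ∀ j, b j ≠ 0 := by
    intro j h0
    have h1 := heproj (fun _ => 1) 1 (j + 1) (by omega)
    have h2 : ∑ i ∈ range (j + 1), (1 : ℝ) • diffSeq b i = b j := by
      simp only [one_smul]
      exact ps_diff b j
    have h3 : ∑ i ∈ range 1, (1 : ℝ) • diffSeq b i = diffSeq b 0 := by simp
    rw [h2, h3, h0, norm_zero] at h1
    simp at h1
    exact hene 0 h1
  constructor
  · -- WeakCauchy b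
    intro f
    obtain ⟨L, hL⟩ := hWCp f
    refine ⟨L, ?_⟩
    have h1 := (tendsto_add_atTop_iff_nat 1).mpr hL
    apply h1.congr
    intro n
    rw [ps_diff]
  have hCe0 : (0:ℝ) ≤ Ce := by linarith
  have hfrac : (0:ℝ) ≤ 2 * Ce * M / a := div_nonneg (by nlinarith) hapos.le
  constructor
  · -- IsBasic b
    refine ⟨Ce + 2 * Ce * M / a, by linarith, hbne, ?_⟩
    intro c m n hmn
    set Sn := ‖∑ j ∈ range n, c j • b j‖ with hSndef
    have hSn0 : 0 ≤ Sn := norm_nonneg _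
    rcases Nat.eq_zero_or_pos m with hm0 | hm1
    · subst hm0
      simp only [range_zero, Finset.sum_empty, norm_zero]
      nlinarith [mul_nonneg (sub_nonneg.mpr hCe1) hSn0, mul_nonneg hfrac hSn0, hSn0]
    rcases eq_or_lt_of_le hmn with hmeq | hmlt
    · subst hmeq
      rw [← hSndef]
      nlinarith [mul_nonneg (sub_nonneg.mpr hCe1) hSn0, mul_nonneg hfrac hSn0]
    -- 1 ≤ m < n
    set D : ℕ → ℝ := fun i => ∑ j ∈ Finset.Ico i n, c j with hD
    have hDdiff : ∀ j, j < n → D j - D (j + 1) = c j := by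
      intro j hj
      have : D j = c j + D (j + 1) := Finset.sum_eq_sum_Ico_succ_bot hj c
      rw [this]; ring
    have hSn : ∑ j ∈ range n, c j • b j = ∑ i ∈ range n, D i • diffSeq b i :=
      sum_eq_diff b c n
    -- decompose m-partial sum
    obtain ⟨m', rfl⟩ : ∃ m', m = m' + 1 := ⟨m - 1, by omega⟩
    have hSm : ∑ j ∈ range (m' + 1), c j • b j
        = ∑ i ∈ range (m' + 1), D i • diffSeq b i - D (m' + 1) • b m' := by
      rw [abel_id b D m']
      have h1 : ∀ j ∈ range (m' + 1), (D j - D (j + 1)) • b j = c j • b j := by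
        intro j hj
        have hj' : j < m' + 1 := Finset.mem_range.mp hj
        rw [hDdiff j (by omega)]
      rw [Finset.sum_congr rfl h1]
      abel
    -- bound on |D (m'+1)|
    have hTDm : ‖∑ i ∈ range (m' + 1), D i • diffSeq b i‖ ≤ Ce * Sn := by
      have := heproj D (m' + 1) n hmn
      rwa [← hSn, ← hSndef] at this
    have hTDm1 : ‖∑ i ∈ range (m' + 2), D i • diffSeq b i‖ ≤ Ce * Sn := by
      have := heproj D (m' + 2) n (by omega)
      rwa [← hSn, ← hSndef] at this
    have hDm : |D (m' + 1)| * a ≤ 2 * (Ce * Sn) := by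
      have h1 : D (m' + 1) • diffSeq b (m' + 1)
          = ∑ i ∈ range (m' + 2), D i • diffSeq b i
            - ∑ i ∈ range (m' + 1), D i • diffSeq b i := by
        rw [Finset.sum_range_succ]; abel
      have h2 : ‖D (m' + 1) • diffSeq b (m' + 1)‖ ≤ 2 * (Ce * Sn) := by
        rw [h1]
        calc ‖_ - _‖ ≤ ‖∑ i ∈ range (m' + 2), D i • diffSeq b i‖
              + ‖∑ i ∈ range (m' + 1), D i • diffSeq b i‖ := norm_sub_le _ _
          _ ≤ 2 * (Ce * Sn) := by linarith
      have h3 : |D (m' + 1)| * a ≤ |D (m' + 1)| * ‖diffSeq b (m' + 1)‖ :=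
        mul_le_mul_of_nonneg_left (hsA (m' + 1)).1 (abs_nonneg _)
      rw [← Real.norm_eq_abs, ← norm_smul, Real.norm_eq_abs] at h3
      linarith
    have hDm' : |D (m' + 1)| ≤ 2 * (Ce * Sn) / a := by
      rw [le_div_iff₀ hapos]
      exact hDm
    rw [hSm]
    calc ‖∑ i ∈ range (m' + 1), D i • diffSeq b i - D (m' + 1) • b m'‖
        ≤ ‖∑ i ∈ range (m' + 1), D i • diffSeq b i‖ + ‖D (m' + 1) • b m'‖ :=
          norm_sub_le _ _
      _ ≤ Ce * Sn + |D (m' + 1)| * ‖b m'‖ := by rw [norm_smul, Real.norm_eq_abs]; linarith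
      _ ≤ Ce * Sn + (2 * (Ce * Sn) / a) * M := by
          have : |D (m' + 1)| * ‖b m'‖ ≤ (2 * (Ce * Sn) / a) * M :=
            mul_le_mul hDm' (hM m') (norm_nonneg _) (by positivity)
          linarith
      _ = (Ce + 2 * Ce * M / a) * Sn := by field_simp
  · -- DominatesSummingBasis b
    refine ⟨Ce / a, fun c n => ?_⟩
    rcases Nat.eq_zero_or_pos n with hn0 | hn1
    · subst hn0; simp
    set D : ℕ → ℝ := fun i => ∑ j ∈ Finset.Ico i n, c j with hD
    have hSn : ∑ j ∈ range n, c j • b j = ∑ i ∈ range n, D i • diffSeq b i :=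
      sum_eq_diff b c n
    have hD0 : D 0 = ∑ j ∈ range n, c j := by
      rw [Finset.range_eq_Ico]
    have h1 : ‖∑ i ∈ range 1, D i • diffSeq b i‖
        ≤ Ce * ‖∑ i ∈ range n, D i • diffSeq b i‖ := heproj D 1 n (by omega)
    have h2 : ∑ i ∈ range 1, D i • diffSeq b i = D 0 • diffSeq b 0 := by simp
    have h3 : |D 0| * a ≤ |D 0| * ‖diffSeq b 0‖ :=
      mul_le_mul_of_nonneg_left (hsA 0).1 (abs_nonneg _)
    rw [← Real.norm_eq_abs, ← norm_smul, Real.norm_eq_abs] at h3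
    rw [h2] at h1
    rw [← hSn] at h1
    rw [← hD0, div_mul_eq_mul_div, le_div_iff₀ hapos]
    calc |D 0| * a ≤ ‖D 0 • diffSeq b 0‖ := h3
      _ ≤ Ce * ‖∑ j ∈ range n, c j • b j‖ := h1

end Aux

/-- a sequence is an (s)-sequence iff its difference sequence is a
(c)-sequence. -/
theorem stmt2 {X : Type*} [NormedAddCommGroup X] [NormedSpace ℝ X]
    (b : ℕ → X) :
    IsSSeq b ↔ IsCSeq (diffSeq b) :=
  ⟨forward_dir b, backward_dir b⟩
end

section
/- Every non-trivial weak-Cauchy sequence in a Banach space has an (s)-subsequence. -/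
open Filter Finset

section AuxLemmas

variable {W : Type*} [NormedAddCommGroup W] [NormedSpace ℝ W]


variable {W : Type*} [NormedAddCommGroup W] [NormedSpace ℝ W]

lemma exists_norming (v : StrongDual ℝ W) {r : ℝ} (hr : r < ‖v‖) :
    ∃ g : W, ‖g‖ ≤ 1 ∧ r < v g := by
  obtain ⟨g, hg1, hg2⟩ := ContinuousLinearMap.exists_lt_apply_of_lt_opNorm v hr
  rcases le_or_gt (v g) 0 with h | h
  · refine ⟨-g, by simpa using hg1.le, ?_⟩
    rw [map_neg]
    rwa [Real.norm_eq_abs, abs_of_nonpos h] at hg2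
  · exact ⟨g, hg1.le, by rwa [Real.norm_eq_abs, abs_of_pos h] at hg2⟩

lemma mazur_step (y : ℕ → StrongDual ℝ W) {d : ℝ} (hd : 0 < d)
    (hy : ∀ n, d ≤ ‖y n‖) (hnull : ∀ g : W, Tendsto (fun n => y n g) atTop (nhds 0))
    (E : Submodule ℝ (StrongDual ℝ W)) (hE : FiniteDimensional ℝ E)
    {δ : ℝ} (hδ0 : 0 < δ) (hδ1 : δ ≤ 1) :
    ∃ N, ∀ n ≥ N, ∀ u ∈ E, ∀ t : ℝ, (1 - δ) * ‖u‖ ≤ ‖u + t • y n‖ := by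
  classical
  haveI := hE
  have hK : IsCompact ((Subtype.val : E → _) '' Metric.sphere (0 : E) 1) :=
    (isCompact_sphere _ _).image continuous_subtype_val
  set K : Set (StrongDual ℝ W) := (Subtype.val : E → _) '' Metric.sphere (0 : E) 1 with hKdef
  have hgex : ∀ u : StrongDual ℝ W, ∃ g : W, u ∈ K → (‖g‖ ≤ 1 ∧ 1 - δ/3 < u g) := by
    intro u
    by_cases hu : u ∈ K
    · obtain ⟨v, hv, rfl⟩ := hu
      have hvn : ‖(v : StrongDual ℝ W)‖ = 1 := by
        rw [Metric.mem_sphere, Subtype.dist_eq] at hv; simpa using hv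
      obtain ⟨g, hg1, hg2⟩ := exists_norming (v : StrongDual ℝ W)
        (r := 1 - δ/3) (by rw [hvn]; linarith)
      exact ⟨g, fun _ => ⟨hg1, hg2⟩⟩
    · exact ⟨0, fun h => absurd h hu⟩
  choose g hg using hgex
  obtain ⟨t, ht, hcov⟩ := hK.elim_nhds_subcover (fun u => Metric.ball u (δ/3))
    (fun u _ => Metric.ball_mem_nhds u (by linarith))
  have hev : ∀ᶠ n in atTop, ∀ u ∈ t, |y n (g u)| ≤ δ * d / 6 := by
    rw [eventually_all_finset]
    intro u _
    have h2 : ∀ᶠ n in atTop, ‖y n (g u)‖ < δ * d / 6 :=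
      (NormedAddCommGroup.tendsto_nhds_zero.mp (hnull (g u))) _ (by positivity)
    exact h2.mono fun n hn => le_of_lt (by simpa [Real.norm_eq_abs] using hn)
  obtain ⟨N, hN⟩ := eventually_atTop.mp hev
  refine ⟨N, fun n hn u hu s => ?_⟩
  by_cases hu0 : u = 0
  · have : (0:ℝ) ≤ ‖(0 : StrongDual ℝ W) + s • y n‖ := norm_nonneg _
    simpa [hu0] using this
  have hr : 0 < ‖u‖ := norm_pos_iff.mpr hu0
  set u' := ‖u‖⁻¹ • u with hu'
  set s' := ‖u‖⁻¹ * s with hs'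
  have hrepr : u + s • y n = ‖u‖ • (u' + s' • y n) := by
    rw [hu', hs', smul_add, smul_smul, smul_smul, mul_inv_cancel₀ hr.ne', one_smul,
      mul_inv_cancel_left₀ hr.ne']
  have hscale : ‖u + s • y n‖ = ‖u‖ * ‖u' + s' • y n‖ := by
    rw [hrepr, norm_smul, Real.norm_eq_abs, abs_of_pos hr]
  have hnorm1 : ‖u'‖ = 1 := by
    rw [hu', norm_smul, Real.norm_eq_abs, abs_of_pos (inv_pos.mpr hr), inv_mul_cancel₀ hr.ne']
  have hu'K : u' ∈ K := by
    refine ⟨⟨u', Submodule.smul_mem E ‖u‖⁻¹ hu⟩, ?_, rfl⟩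
    rw [Metric.mem_sphere, Subtype.dist_eq]
    simpa using hnorm1
  have key : 1 - δ ≤ ‖u' + s' • y n‖ := by
    rcases le_or_gt (2 / d) |s'| with hts | hts
    · have h1 : ‖s' • y n‖ ≤ ‖u' + s' • y n‖ + ‖u'‖ := by
        have h := norm_sub_le (u' + s' • y n) u'
        simpa [add_sub_cancel_left] using h
      have h2 : 2 ≤ |s'| * ‖y n‖ := by
        rw [← div_mul_cancel₀ (2:ℝ) hd.ne']
        exact mul_le_mul hts (hy n) hd.le (abs_nonneg _)
      rw [norm_smul, Real.norm_eq_abs] at h1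
      linarith [hnorm1]
    · have hu'cov := hcov hu'K
      simp only [Set.mem_iUnion] at hu'cov
      obtain ⟨u₀, hu₀t, hdist⟩ := hu'cov
      have hdist' : ‖u' - u₀‖ < δ/3 := by
        rw [← dist_eq_norm]; exact Metric.mem_ball.mp hdist
      obtain ⟨hg1, hg2⟩ := hg u₀ (ht u₀ hu₀t)
      set g₀ := g u₀ with hg₀
      have hyg : |y n g₀| ≤ δ * d / 6 := hN n hn u₀ hu₀t
      have happ : (u' + s' • y n) g₀ = u₀ g₀ + ((u' - u₀) g₀ + s' * (y n g₀)) := by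
        simp only [ContinuousLinearMap.add_apply, ContinuousLinearMap.sub_apply,
          ContinuousLinearMap.smul_apply, smul_eq_mul]
        ring
      have hb1 : |(u' - u₀) g₀| ≤ δ/3 := by
        calc |(u' - u₀) g₀| ≤ ‖u' - u₀‖ * ‖g₀‖ := (u' - u₀).le_opNorm g₀
          _ ≤ (δ/3) * 1 := mul_le_mul hdist'.le hg1 (norm_nonneg _) (by linarith)
          _ = δ/3 := mul_one _
      have hb2 : |s' * (y n g₀)| ≤ δ/3 := by
        rw [abs_mul]
        calc |s'| * |y n g₀| ≤ (2/d) * (δ * d / 6) :=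
          mul_le_mul hts.le hyg (abs_nonneg _) (by positivity)
          _ = δ/3 := by field_simp; ring
      have hb3 : (u' + s' • y n) g₀ ≤ ‖u' + s' • y n‖ := by
        calc (u' + s' • y n) g₀ ≤ |(u' + s' • y n) g₀| := le_abs_self _
          _ ≤ ‖u' + s' • y n‖ * ‖g₀‖ := (u' + s' • y n).le_opNorm g₀
          _ ≤ ‖u' + s' • y n‖ * 1 := by
            exact mul_le_mul_of_nonneg_left hg1 (norm_nonneg _)
          _ = _ := mul_one _
      have := abs_le.mp hb1
      have := abs_le.mp hb2
      linarith [happ ▸ hb3]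
  calc (1 - δ) * ‖u‖ ≤ ‖u' + s' • y n‖ * ‖u‖ :=
        mul_le_mul_of_nonneg_right key hr.le
    _ = ‖u + s • y n‖ := by rw [hscale, mul_comm]


lemma mazur_select (y : ℕ → StrongDual ℝ W) {d : ℝ} (hd : 0 < d)
    (hy : ∀ n, d ≤ ‖y n‖) (hnull : ∀ g : W, Tendsto (fun n => y n g) atTop (nhds 0))
    (f : W) {η : ℝ} (hη : 0 < η) :
    ∃ k : ℕ → ℕ, StrictMono k ∧ (∀ m, |y (k m) f| ≤ η * (1/2)^m) ∧
      ∀ m, ∀ u ∈ Submodule.span ℝ (y '' {i | ∃ j < m, k j = i}), ∀ t : ℝ,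
        (1 - (1/2:ℝ)^m / 4) * ‖u‖ ≤ ‖u + t • y (k m)‖ := by
  classical
  have hexists : ∀ l : List ℕ, ∃ n : ℕ, (∀ i ∈ l, i < n) ∧ |y n f| ≤ η * (1/2)^l.length ∧
      ∀ u ∈ Submodule.span ℝ (y '' {i | i ∈ l}), ∀ t : ℝ,
        (1 - (1/2:ℝ)^l.length/4) * ‖u‖ ≤ ‖u + t • y n‖ := by
    intro l
    have hfin : (y '' {i | i ∈ l}).Finite := (l.finite_toSet).image y
    haveI hEfd : FiniteDimensional ℝ (Submodule.span ℝ (y '' {i | i ∈ l})) :=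
      FiniteDimensional.span_of_finite ℝ hfin
    have hδ0 : (0:ℝ) < (1/2:ℝ)^l.length/4 := by positivity
    have hδ1 : (1/2:ℝ)^l.length/4 ≤ 1 := by
      have : (1/2:ℝ)^l.length ≤ 1 := pow_le_one₀ (by norm_num) (by norm_num)
      linarith
    obtain ⟨N1, hN1⟩ := mazur_step y hd hy hnull
      (Submodule.span ℝ (y '' {i | i ∈ l})) hEfd hδ0 hδ1
    have h2 : ∀ᶠ n in atTop, |y n f| ≤ η * (1/2)^l.length := by
      have := (NormedAddCommGroup.tendsto_nhds_zero.mp (hnull f)) (η * (1/2)^l.length)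
        (by positivity)
      exact this.mono fun n hn => le_of_lt (by simpa [Real.norm_eq_abs] using hn)
    obtain ⟨N2, hN2⟩ := eventually_atTop.mp h2
    have hB : ∀ (l' : List ℕ), ∀ i ∈ l', i ≤ l'.foldr max 0 := by
      intro l'
      induction l' with
      | nil => intro i hi; cases hi
      | cons a l' ih =>
        intro i hi
        rcases List.mem_cons.mp hi with rfl | h
        · exact le_max_left _ _
        · exact le_trans (ih i h) (le_max_right _ _)
    refine ⟨max (max N1 N2) (l.foldr max 0 + 1), fun i hi => ?_, ?_, ?_⟩
    · exact lt_of_lt_of_le (Nat.lt_succ_of_le (hB l i hi)) (le_max_right _ _)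
    · exact hN2 _ (le_trans (le_max_right N1 N2) (le_max_left _ _))
    · exact hN1 _ (le_trans (le_max_left N1 N2) (le_max_left _ _))
  choose next hnext using hexists
  let L : ℕ → List ℕ := fun m => Nat.rec [] (fun _ ih => next ih :: ih) m
  have hLs : ∀ m, L (m+1) = next (L m) :: L m := fun _ => rfl
  refine ⟨fun m => next (L m), ?_, ?_, ?_⟩
  · apply strictMono_nat_of_lt_succ
    intro m
    exact (hnext (L (m+1))).1 _ (by rw [hLs]; exact List.mem_cons_self)
  · intro m
    have hlen : ∀ m, (L m).length = m := by
      intro m; induction m with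
      | zero => rfl
      | succ m ih => rw [hLs]; simp [ih]
    have := (hnext (L m)).2.1
    rwa [hlen m] at this
  · intro m u hu t
    have hlen : ∀ m, (L m).length = m := by
      intro m; induction m with
      | zero => rfl
      | succ m ih => rw [hLs]; simp [ih]
    have hmem : ∀ m i, i ∈ L m ↔ ∃ j < m, next (L j) = i := by
      intro m
      induction m with
      | zero => simp [L]
      | succ m ih =>
        intro i
        rw [hLs, List.mem_cons]
        constructor
        · rintro (rfl | h)
          · exact ⟨m, Nat.lt_succ_self m, rfl⟩
          · obtain ⟨j, hj, rfl⟩ := (ih i).mp h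
            exact ⟨j, hj.trans (Nat.lt_succ_self m), rfl⟩
        · rintro ⟨j, hj, rfl⟩
          rcases Nat.lt_succ_iff_lt_or_eq.mp hj with hj' | rfl
          · exact Or.inr ((ih _).mpr ⟨j, hj', rfl⟩)
          · exact Or.inl rfl
    have hset : {i | ∃ j < m, next (L j) = i} = {i | i ∈ L m} :=
      Set.ext fun i => (hmem m i).symm
    have := (hnext (L m)).2.2 u (by rwa [← hset]) t
    rwa [hlen m] at this


lemma prod_one_sub_ge (δ : ℕ → ℝ) (h0 : ∀ j, 0 ≤ δ j) (h1 : ∀ j, δ j ≤ 1) (s : Finset ℕ) :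
    1 - ∑ j ∈ s, δ j ≤ ∏ j ∈ s, (1 - δ j) := by
  classical
  induction s using Finset.cons_induction with
  | empty => simp
  | cons a s ha ih =>
    rw [Finset.prod_cons, Finset.sum_cons]
    have hs0 : 0 ≤ ∑ j ∈ s, δ j := Finset.sum_nonneg fun j _ => h0 j
    nlinarith [h0 a, h1 a, hs0, ih]


end AuxLemmas

/-- The double dual, with the instances on the dual taken through its normed structure. -/
abbrev DDual (X : Type*) [NormedAddCommGroup X] [NormedSpace ℝ X] :=
  @ContinuousLinearMap ℝ ℝ _ _ (RingHom.id ℝ) (X →L[ℝ] ℝ)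
    (@UniformSpace.toTopologicalSpace _ (@PseudoMetricSpace.toUniformSpace _
      (@SeminormedAddCommGroup.toPseudoMetricSpace (X →L[ℝ] ℝ)
        (@NormedAddCommGroup.toSeminormedAddCommGroup _ ContinuousLinearMap.toNormedAddCommGroup))))
    (@AddCommGroup.toAddCommMonoid _ (@NormedAddCommGroup.toAddCommGroup (X →L[ℝ] ℝ)
      ContinuousLinearMap.toNormedAddCommGroup)) ℝ _ _
    (@NormedSpace.toModule ℝ (X →L[ℝ] ℝ) _
      (@NormedAddCommGroup.toSeminormedAddCommGroup _ ContinuousLinearMap.toNormedAddCommGroup)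
      ContinuousLinearMap.toNormedSpace) _

set_option maxHeartbeats 1000000 in
/-- every non-trivial weak-Cauchy sequence has an (s)-subsequence. -/
theorem stmt3 {X : Type*} [NormedAddCommGroup X] [NormedSpace ℝ X] [CompleteSpace X]
    (x : ℕ → X) (hx : NontrivialWeakCauchy x) :
    ∃ k : ℕ → ℕ, StrictMono k ∧ IsSSeq (x ∘ k) := by
  classical
  set J : X →ₗᵢ[ℝ] DDual X := NormedSpace.inclusionInDoubleDualLi ℝ (E := X) with hJ
  -- the limit functional
  have h_tend : ∀ φ : X →L[ℝ] ℝ, Tendsto (fun n => φ (x n)) atTop (nhds ((hx.1 φ).choose)) :=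
    fun φ => (hx.1 φ).choose_spec
  set limF : (X →L[ℝ] ℝ) → ℝ := fun φ => (hx.1 φ).choose with hlimF
  have h_tend' : ∀ φ : X →L[ℝ] ℝ, Tendsto (fun n => φ (x n)) atTop (nhds (limF φ)) := h_tend
  -- boundedness
  obtain ⟨M, hM⟩ : ∃ M : ℝ, ∀ n, ‖x n‖ ≤ M := by
    obtain ⟨M, hM⟩ := banach_steinhaus (E := X →L[ℝ] ℝ) (F := ℝ)
      (g := fun n => (J (x n) : DDual X))
      (fun φ => by
        obtain ⟨C, hC⟩ := ((h_tend φ).norm.bddAbove_range)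
        exact ⟨C, fun n => by
          exact hC (Set.mem_range_self n)⟩)
    exact ⟨M, fun n => by
      have := hM n
      rwa [J.norm_map] at this⟩
  have hM0 : 0 ≤ M := le_trans (norm_nonneg _) (hM 0)
  -- the functional F
  have hadd : ∀ φ ψ, limF (φ + ψ) = limF φ + limF ψ := by
    intro φ ψ
    refine tendsto_nhds_unique (h_tend (φ + ψ)) ?_
    simpa [ContinuousLinearMap.add_apply] using (h_tend φ).add (h_tend ψ)
  have hsmul : ∀ (c : ℝ) φ, limF (c • φ) = c * limF φ := by
    intro c φ
    refine tendsto_nhds_unique (h_tend (c • φ)) ?_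
    simpa [ContinuousLinearMap.smul_apply] using (h_tend φ).const_mul c
  have hbound : ∀ φ : X →L[ℝ] ℝ, |limF φ| ≤ M * ‖φ‖ := by
    intro φ
    refine le_of_tendsto (h_tend φ).abs (Filter.Eventually.of_forall fun n => ?_)
    calc |φ (x n)| ≤ ‖φ‖ * ‖x n‖ := φ.le_opNorm (x n)
      _ ≤ ‖φ‖ * M := by
          exact mul_le_mul_of_nonneg_left (hM n) (norm_nonneg _)
      _ = M * ‖φ‖ := mul_comm _ _
  set F : DDual X :=
    LinearMap.mkContinuous
      { toFun := limF
        map_add' := hadd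
        map_smul' := hsmul } M
      (fun φ => by simpa [Real.norm_eq_abs] using hbound φ) with hFdef
  have hFapp : ∀ φ, F φ = limF φ := fun φ => rfl
  -- F is not in the range of J
  have hFnot : ∀ z : X, F ≠ J z := by
    intro z hz
    exact hx.2 ⟨z, fun φ => by
      have : F φ = φ z := by rw [hz]; rfl
      rw [← this, hFapp]; exact h_tend φ⟩
  -- distance from range
  obtain ⟨d, hd0, hdist⟩ : ∃ d : ℝ, 0 < d ∧ ∀ z : X, d ≤ ‖F - J z‖ := by
    have hclosed : IsClosed (Set.range (J : X → _)) :=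
      (Isometry.isClosedEmbedding (γ := DDual X)
        J.isometry).isClosed_range
    have hFmem : F ∈ (Set.range (J : X → _))ᶜ := by
      intro hmem
      obtain ⟨z, hz⟩ := hmem
      exact hFnot z hz.symm
    obtain ⟨d, hd0, hball⟩ := Metric.isOpen_iff.mp hclosed.isOpen_compl F hFmem
    refine ⟨d, hd0, fun z => ?_⟩
    by_contra h
    push_neg at h
    have : J z ∈ Metric.ball F d := by
      rw [Metric.mem_ball, dist_comm, dist_eq_norm F (J z)]
      exact h
    exact hball this ⟨z, rfl⟩
  have hJapp : ∀ (z : X) (φ : X →L[ℝ] ℝ), (J z) φ = φ z := fun z φ => rfl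
  -- the weak*-null sequence
  set y : ℕ → DDual X := fun n => J (x n) - F with hy
  have hynorm : ∀ n, d ≤ ‖y n‖ := fun n => by
    rw [hy]; rw [norm_sub_rev (J (x n)) F]; exact hdist (x n)
  have hyapp : ∀ n (φ : X →L[ℝ] ℝ), y n φ = φ (x n) - limF φ := by
    intro n φ
    rw [hy]
    simp only [ContinuousLinearMap.sub_apply]
    rw [hJapp, hFapp]
  have hynull : ∀ φ : X →L[ℝ] ℝ, Tendsto (fun n => y n φ) atTop (nhds 0) := by
    intro φ
    have h1 : Tendsto (fun n => φ (x n) - limF φ) atTop (nhds 0) := by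
      simpa using (h_tend' φ).sub_const (limF φ)
    have h2 : (fun n => y n φ) = fun n => φ (x n) - limF φ := funext fun n => hyapp n φ
    rw [h2]; exact h1
  -- functional f with F f = 1
  have hFne : F ≠ 0 := fun h => hFnot 0 (by rw [h, LinearIsometry.map_zero])
  obtain ⟨f₀, hf₀⟩ : ∃ φ, F φ ≠ 0 := by
    by_contra h
    push_neg at h
    exact hFne (ContinuousLinearMap.ext fun φ => by simp [h φ])
  set f : X →L[ℝ] ℝ := (F f₀)⁻¹ • f₀ with hf
  have hFf : F f = 1 := by rw [hf, map_smul, smul_eq_mul]; field_simp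
  have hlimf : limF f = 1 := by rw [← hFapp]; exact hFf
  -- the constant η
  set η : ℝ := d / (32 * (‖F‖ + 1)) with hη
  have hFnorm0 : (0:ℝ) ≤ ‖F‖ := norm_nonneg F
  have hη0 : 0 < η := by rw [hη]; positivity
  have hdF : d ≤ ‖F‖ := by
    have := hdist 0
    rwa [map_zero, sub_zero] at this
  have hF1 : (0:ℝ) < 32 * (‖F‖ + 1) := by positivity
  have hη32 : η < 1/32 := by
    rw [hη, div_lt_iff₀ hF1]
    linarith
  -- Mazur selection
  obtain ⟨k, hkmono, hkf, hkspan⟩ := mazur_select y hd0 hynorm hynull f hη0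
  set V : (ℕ → ℝ) → ℕ → DDual X :=
    fun c n => ∑ j ∈ Finset.range n, c j • y (k j) with hV
  set S : (ℕ → ℝ) → ℕ → X := fun c n => ∑ j ∈ Finset.range n, c j • x (k j) with hS
  set T : (ℕ → ℝ) → ℕ → ℝ := fun c n => ∑ j ∈ Finset.range n, c j with hT
  have hVS : ∀ c n, V c n = J (S c n) - (T c n) • F := by
    intro c n
    simp only [hV, hS, hT, hy, smul_sub]
    rw [Finset.sum_sub_distrib, map_sum, Finset.sum_smul]
    simp only [map_smul]
  have hsuccV : ∀ (c : ℕ → ℝ) (n : ℕ), V c (n+1) = V c n + c n • y (k n) := by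
    intro c n
    simp only [hV]
    exact Finset.sum_range_succ _ n
  have hspanV : ∀ (c : ℕ → ℝ) (n : ℕ),
      V c n ∈ Submodule.span ℝ (y '' {i | ∃ j < n, k j = i}) := by
    intro c n
    simp only [hV]
    refine Submodule.sum_mem _ fun j hj => Submodule.smul_mem _ _ ?_
    exact Submodule.subset_span ⟨k j, ⟨j, Finset.mem_range.mp hj, rfl⟩, rfl⟩
  have happV : ∀ (c : ℕ → ℝ) (n : ℕ), V c n f = ∑ j ∈ Finset.range n, c j * (y (k j) f) := by
    intro c n
    simp only [hV]
    simp [ContinuousLinearMap.sum_apply, ContinuousLinearMap.smul_apply]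
  clear_value J limF F y f η V S T
  -- product lower bound
  have hprod : ∀ m n : ℕ, (1:ℝ)/2 ≤ ∏ j ∈ Finset.Ico m n, (1 - (1/2:ℝ)^j/4) := by
    intro m n
    have h1 := prod_one_sub_ge (fun j => (1/2:ℝ)^j/4)
      (fun j => by positivity)
      (fun j => by
        have : (1/2:ℝ)^j ≤ 1 := pow_le_one₀ (by norm_num) (by norm_num)
        linarith)
      (Finset.Ico m n)
    have h2 : ∑ j ∈ Finset.Ico m n, (1/2:ℝ)^j/4 ≤ 1/2 := by
      have hsub : Finset.Ico m n ⊆ Finset.range n := by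
        intro j hj
        exact Finset.mem_range.mpr (Finset.mem_Ico.mp hj).2
      have h3 : ∑ j ∈ Finset.Ico m n, (1/2:ℝ)^j/4 ≤ ∑ j ∈ Finset.range n, (1/2:ℝ)^j/4 :=
        Finset.sum_le_sum_of_subset_of_nonneg hsub (fun j _ _ => by positivity)
      have h4 : ∑ j ∈ Finset.range n, (1/2:ℝ)^j/4 = (∑ j ∈ Finset.range n, (1/2:ℝ)^j)/4 := by
        rw [Finset.sum_div]
      have h5 := sum_geometric_two_le n
      linarith
    linarith
  have hprodnn : ∀ m n : ℕ, (0:ℝ) ≤ ∏ j ∈ Finset.Ico m n, (1 - (1/2:ℝ)^j/4) :=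
    fun m n => le_trans (by norm_num) (hprod m n)
  -- basic inequality for V
  have hVchain : ∀ (c : ℕ → ℝ) (m n : ℕ), m ≤ n →
      (∏ j ∈ Finset.Ico m n, (1 - (1/2:ℝ)^j/4)) * ‖V c m‖ ≤ ‖V c n‖ := by
    intro c m n hmn
    induction n, hmn using Nat.le_induction with
    | base => simp
    | succ n hmn ih =>
      have hkey := hkspan n (V c n) (hspanV c n) (c n)
      have hsucc : V c (n+1) = V c n + c n • y (k n) := hsuccV c n
      have hptop : ∏ j ∈ Finset.Ico m (n+1), (1 - (1/2:ℝ)^j/4)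
          = (∏ j ∈ Finset.Ico m n, (1 - (1/2:ℝ)^j/4)) * (1 - (1/2:ℝ)^n/4) :=
        Finset.prod_Ico_succ_top hmn _
      have hfac : (0:ℝ) ≤ 1 - (1/2:ℝ)^n/4 := by
        have : (1/2:ℝ)^n ≤ 1 := pow_le_one₀ (by norm_num) (by norm_num)
        linarith
      rw [hptop, hsucc]
      calc (∏ j ∈ Finset.Ico m n, (1 - (1/2:ℝ)^j/4)) * (1 - (1/2:ℝ)^n/4) * ‖V c m‖
          = (1 - (1/2:ℝ)^n/4) * ((∏ j ∈ Finset.Ico m n, (1 - (1/2:ℝ)^j/4)) * ‖V c m‖) := by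
            ring
        _ ≤ (1 - (1/2:ℝ)^n/4) * ‖V c n‖ := mul_le_mul_of_nonneg_left ih hfac
        _ ≤ ‖V c n + c n • y (k n)‖ := hkey
  have hVle : ∀ (c : ℕ → ℝ) (m n : ℕ), m ≤ n → ‖V c m‖ ≤ 2 * ‖V c n‖ := by
    intro c m n hmn
    have h1 := hVchain c m n hmn
    have h2 := hprod m n
    linarith only [h1, mul_le_mul_of_nonneg_right h2 (norm_nonneg (V c m))]
  -- coefficient bound
  have hcoef : ∀ (c : ℕ → ℝ) (n j : ℕ), j < n → |c j| * d ≤ 4 * ‖V c n‖ := by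
    intro c n j hj
    have hdiff : c j • y (k j) = V c (j+1) - V c j := by
      rw [hsuccV]; abel
    have h1 : |c j| * ‖y (k j)‖ = ‖c j • y (k j)‖ := by
      rw [norm_smul, Real.norm_eq_abs]
    have h2 : ‖V c (j+1) - V c j‖ ≤ ‖V c (j+1)‖ + ‖V c j‖ := norm_sub_le _ _
    have h3 : ‖V c (j+1)‖ ≤ 2 * ‖V c n‖ := hVle c (j+1) n hj
    have h4 : ‖V c j‖ ≤ 2 * ‖V c n‖ := hVle c j n (le_of_lt (Nat.lt_of_lt_of_le hj le_rfl))
    have h5 : |c j| * d ≤ |c j| * ‖y (k j)‖ :=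
      mul_le_mul_of_nonneg_left (hynorm (k j)) (abs_nonneg _)
    rw [h1, hdiff] at h5
    linarith
  -- V applied to f
  have hVf : ∀ (c : ℕ → ℝ) (n : ℕ), |V c n f| ≤ ‖V c n‖ / (4 * (‖F‖ + 1)) := by
    intro c n
    have happ : V c n f = ∑ j ∈ Finset.range n, c j * (y (k j) f) := happV c n
    have h1 : |V c n f| ≤ ∑ j ∈ Finset.range n, |c j| * |y (k j) f| := by
      rw [happ]
      refine le_trans (Finset.abs_sum_le_sum_abs _ _) ?_
      exact le_of_eq (Finset.sum_congr rfl fun j _ => abs_mul _ _)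
    have h2 : ∑ j ∈ Finset.range n, |c j| * |y (k j) f|
        ≤ ∑ j ∈ Finset.range n, (4 * ‖V c n‖ / d) * (η * (1/2)^j) := by
      refine Finset.sum_le_sum fun j hj => ?_
      refine mul_le_mul ?_ (hkf j) (abs_nonneg _) (by positivity)
      rw [le_div_iff₀ hd0]
      exact hcoef c n j (Finset.mem_range.mp hj)
    have h3 : ∑ j ∈ Finset.range n, (4 * ‖V c n‖ / d) * (η * (1/2:ℝ)^j)
        = (4 * ‖V c n‖ / d) * η * ∑ j ∈ Finset.range n, (1/2:ℝ)^j := by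
      rw [Finset.mul_sum]
      exact Finset.sum_congr rfl fun j _ => by ring
    have h4 : (4 * ‖V c n‖ / d) * η * ∑ j ∈ Finset.range n, (1/2:ℝ)^j
        ≤ (4 * ‖V c n‖ / d) * η * 2 := by
      refine mul_le_mul_of_nonneg_left (sum_geometric_two_le n) (by positivity)
    have h5 : (4 * ‖V c n‖ / d) * η * 2 = ‖V c n‖ / (4 * (‖F‖ + 1)) := by
      rw [hη]
      field_simp
      ring
    linarith
  -- value of V at f versus S and T
  have hVfval : ∀ (c : ℕ → ℝ) (n : ℕ), V c n f = f (S c n) - T c n := by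
    intro c n
    rw [hVS]
    simp only [ContinuousLinearMap.sub_apply, ContinuousLinearMap.smul_apply, smul_eq_mul]
    rw [hJapp, hFf, mul_one]
  have hVnorm : ∀ (c : ℕ → ℝ) (n : ℕ), ‖V c n‖ ≤ ‖S c n‖ + |T c n| * ‖F‖ := by
    intro c n
    rw [hVS]
    refine le_trans (norm_sub_le _ _) ?_
    rw [J.norm_map, norm_smul, Real.norm_eq_abs]
  -- domination
  set β : ℝ := 2 * ‖f‖ + 1 with hβ
  clear_value β
  have hβ0 : 0 ≤ β := by rw [hβ]; positivity
  have hdom : ∀ (c : ℕ → ℝ) (n : ℕ), |T c n| ≤ β * ‖S c n‖ := by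
    intro c n
    have h1 := hVf c n
    have h2 := hVfval c n
    have h3 := hVnorm c n
    have h4 : |T c n| ≤ |f (S c n)| + |V c n f| := by
      rw [h2] at h1 ⊢
      have := abs_sub_abs_le_abs_sub (f (S c n)) (f (S c n) - T c n)
      have h5 : |T c n| ≤ |f (S c n)| + |f (S c n) - T c n| := by
        have := abs_sub (f (S c n)) (T c n)
        calc |T c n| = |f (S c n) - (f (S c n) - T c n)| := by ring_nf
          _ ≤ |f (S c n)| + |f (S c n) - T c n| := abs_sub _ _
      exact h5
    have h6 : |f (S c n)| ≤ ‖f‖ * ‖S c n‖ := f.le_opNorm _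
    have h7 : ‖V c n‖ / (4 * (‖F‖ + 1)) ≤ ‖S c n‖/4 + |T c n|/4 := by
      rw [div_le_iff₀ (by positivity)]
      linarith only [hVnorm c n, mul_nonneg (norm_nonneg (S c n)) (norm_nonneg F),
        abs_nonneg (T c n), mul_nonneg (abs_nonneg (T c n)) (norm_nonneg F),
        norm_nonneg (S c n)]
    have h8 : |T c n| ≤ ‖f‖ * ‖S c n‖ + ‖S c n‖/4 + |T c n|/4 := by
      have := le_trans (hVf c n) h7
      linarith
    have h9 : (0:ℝ) ≤ ‖S c n‖ := norm_nonneg _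
    rw [hβ]
    linarith only [h4, h6, h8, h9, mul_nonneg (norm_nonneg f) h9]
  -- |T| d ≤ ‖V‖
  have hTd : ∀ (c : ℕ → ℝ) (m : ℕ), |T c m| * d ≤ ‖V c m‖ := by
    intro c m
    by_cases hT0 : T c m = 0
    · rw [hT0]; simp [norm_nonneg]
    · have h1 := hdist ((T c m)⁻¹ • S c m)
      have h2 : (T c m) • (F - J ((T c m)⁻¹ • S c m)) = (T c m) • F - J (S c m) := by
        rw [smul_sub, map_smul, smul_smul, mul_inv_cancel₀ hT0, one_smul]
      have h3 : ‖(T c m) • (F - J ((T c m)⁻¹ • S c m))‖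
          = |T c m| * ‖F - J ((T c m)⁻¹ • S c m)‖ := by
        rw [norm_smul, Real.norm_eq_abs]
      have h4 : ‖(T c m) • F - J (S c m)‖ = ‖V c m‖ := by
        rw [hVS]; rw [← norm_neg]; congr 1; abel
      calc |T c m| * d ≤ |T c m| * ‖F - J ((T c m)⁻¹ • S c m)‖ :=
            mul_le_mul_of_nonneg_left h1 (abs_nonneg _)
        _ = ‖(T c m) • F - J (S c m)‖ := by rw [← h3, h2]
        _ = ‖V c m‖ := h4
  -- basic constant
  set C : ℝ := 2 * (1 + ‖F‖/d) * (1 + β * ‖F‖) with hC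
  clear_value C
  have hC1 : 1 ≤ C := by
    rw [hC]
    have h1 : (0:ℝ) ≤ ‖F‖/d := div_nonneg hFnorm0 hd0.le
    linarith only [h1, mul_nonneg hβ0 hFnorm0, mul_nonneg h1 (mul_nonneg hβ0 hFnorm0)]
  have hbasic : ∀ (c : ℕ → ℝ) (m n : ℕ), m ≤ n → ‖S c m‖ ≤ C * ‖S c n‖ := by
    intro c m n hmn
    have h1 : ‖S c m‖ = ‖V c m + (T c m) • F‖ := by
      rw [← J.norm_map (S c m), hVS]
      congr 1
      abel
    have h2 : ‖V c m + (T c m) • F‖ ≤ ‖V c m‖ + |T c m| * ‖F‖ := by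
      refine le_trans (norm_add_le _ _) ?_
      rw [norm_smul, Real.norm_eq_abs]
    have h3 : |T c m| * ‖F‖ ≤ (‖V c m‖/d) * ‖F‖ := by
      refine mul_le_mul_of_nonneg_right ?_ hFnorm0
      rw [div_eq_mul_inv, ← mul_le_mul_iff_of_pos_right hd0, mul_assoc, inv_mul_cancel₀ hd0.ne', mul_one]
      exact hTd c m
    have h4 : ‖V c m‖ ≤ 2 * ‖V c n‖ := hVle c m n hmn
    have h5 : ‖V c n‖ ≤ ‖S c n‖ + |T c n| * ‖F‖ := hVnorm c n
    have h6 : |T c n| * ‖F‖ ≤ β * ‖S c n‖ * ‖F‖ :=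
      mul_le_mul_of_nonneg_right (hdom c n) hFnorm0
    have h7 : (0:ℝ) ≤ ‖F‖/d := div_nonneg hFnorm0 hd0.le
    have hpos : (0:ℝ) ≤ 1 + ‖F‖/d := by linarith only [h7]
    rw [h1, hC]
    calc ‖V c m + (T c m) • F‖ ≤ ‖V c m‖ + |T c m| * ‖F‖ := h2
      _ ≤ ‖V c m‖ + (‖V c m‖/d) * ‖F‖ := by linarith only [h3]
      _ = ‖V c m‖ * (1 + ‖F‖/d) := by ring
      _ ≤ (2 * ‖V c n‖) * (1 + ‖F‖/d) := mul_le_mul_of_nonneg_right h4 hpos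
      _ ≤ (2 * (‖S c n‖ + |T c n| * ‖F‖)) * (1 + ‖F‖/d) :=
          mul_le_mul_of_nonneg_right (by linarith only [h5]) hpos
      _ ≤ (2 * (‖S c n‖ + β * ‖S c n‖ * ‖F‖)) * (1 + ‖F‖/d) :=
          mul_le_mul_of_nonneg_right (by linarith only [h6]) hpos
      _ = 2 * (1 + ‖F‖/d) * (1 + β * ‖F‖) * ‖S c n‖ := by ring
  -- nonvanishing
  have hnz : ∀ j : ℕ, x (k j) ≠ 0 := by
    intro j hxj
    have h1 := hkf j
    have h2 : y (k j) f = f (x (k j)) - 1 := by rw [hyapp, hlimf]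
    rw [h2, hxj, map_zero] at h1
    have h3 : η * (1/2:ℝ)^j ≤ η := by
      calc η * (1/2:ℝ)^j ≤ η * 1 := mul_le_mul_of_nonneg_left
            (pow_le_one₀ (by norm_num) (by norm_num)) hη0.le
        _ = η := mul_one _
    simp only [zero_sub, abs_neg, abs_one] at h1
    linarith
  refine ⟨k, hkmono, ?_, ?_, ?_⟩
  · -- WeakCauchy (x ∘ k)
    intro φ
    exact ⟨limF φ, (h_tend' φ).comp hkmono.tendsto_atTop⟩
  · -- IsBasic
    refine ⟨C, hC1, fun j => ?_, fun c m n hmn => ?_⟩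
    · exact fun h => hnz j h
    · have := hbasic c m n hmn
      simpa [hS, Function.comp] using this
  · -- DominatesSummingBasis
    refine ⟨β, fun c n => ?_⟩
    have := hdom c n
    simpa [hS, hT, Function.comp] using this
end

section
/- Let X be a Banach space and G ∈ X** \ X with ||G|| = 1, and let δ = dist(G, X). Then the annihilator pre-space G^⊥ = {x* ∈ X* : G(x*) = 0} η-norms X with η = δ/(1+δ); that is, η||x|| ≤ sup{|y(x)| : y ∈ G^⊥, ||y|| ≤ 1} for all x in X. -/
open Filter Finset

set_option maxHeartbeats 2000000 in
set_option synthInstance.maxHeartbeats 400000 in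
/-- for a norm-one element of the bidual not in (the canonical image
of) X, its pre-annihilator η-norms X with η = δ/(1+δ), δ the distance to X. -/
theorem stmt4 {X : Type*} [NormedAddCommGroup X] [NormedSpace ℝ X] [CompleteSpace X]
    (G : StrongDual ℝ (StrongDual ℝ X))
    (hG : G ∉ Set.range (NormedSpace.inclusionInDoubleDual ℝ X))
    (hG1 : ‖G‖ = 1) :
    ∀ x : X,
      (Metric.infDist G (Set.range (NormedSpace.inclusionInDoubleDual ℝ X)) /
          (1 + Metric.infDist G (Set.range (NormedSpace.inclusionInDoubleDual ℝ X)))) * ‖x‖ ≤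
        sSup {r : ℝ | ∃ y : StrongDual ℝ X, G y = 0 ∧ ‖y‖ ≤ 1 ∧ r = |y x|} := by

  intro x
  classical
  haveI : NormSMulClass ℝ (StrongDual ℝ (StrongDual ℝ X)) :=
    NormedSpace.toNormSMulClass (𝕜 := ℝ) (E := StrongDual ℝ (StrongDual ℝ X))
  set ι := NormedSpace.inclusionInDoubleDual ℝ X with hι
  set δ := Metric.infDist G (Set.range ι) with hδ
  have hδ0 : 0 ≤ δ := Metric.infDist_nonneg
  have h1δ : (0:ℝ) < 1 + δ := by linarith
  set S := {r : ℝ | ∃ y : StrongDual ℝ X, G y = 0 ∧ ‖y‖ ≤ 1 ∧ r = |y x|} with hS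
  have h0S : (0:ℝ) ∈ S := ⟨0, by simp, by simp, by simp⟩
  have hbdd : BddAbove S := by
    refine ⟨‖x‖, ?_⟩
    rintro r ⟨y, -, hy1, rfl⟩
    calc |y x| ≤ ‖y‖ * ‖x‖ := y.le_opNorm x
    _ ≤ 1 * ‖x‖ := by gcongr
    _ = ‖x‖ := one_mul _
  have hsup0 : 0 ≤ sSup S := le_csSup hbdd h0S
  -- the restriction of x (as a bidual element) to the kernel of G
  set Y : Submodule ℝ (StrongDual ℝ X) := LinearMap.ker (G : StrongDual ℝ X →ₗ[ℝ] ℝ) with hY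
  set h : Y →L[ℝ] ℝ := (ι x).comp Y.subtypeL with hh
  letI : Norm (Y →L[ℝ] ℝ) := ContinuousLinearMap.hasOpNorm (𝕜 := ℝ) (𝕜₂ := ℝ) (σ₁₂ := RingHom.id ℝ) (E := Y) (F := ℝ)
  have hhy : ∀ y : Y, h y = (y : StrongDual ℝ X) x := fun y => rfl
  have hnormh : ‖h‖ ≤ sSup S := by
    refine ContinuousLinearMap.opNorm_le_bound _ hsup0 ?_
    intro y
    by_cases hy : (y : StrongDual ℝ X) = 0
    · rw [hhy, hy]; simp [hsup0]
      positivity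
    · have hyn : (0:ℝ) < ‖(y : StrongDual ℝ X)‖ := norm_pos_iff.2 hy
      set z : StrongDual ℝ X := ‖(y : StrongDual ℝ X)‖⁻¹ • (y : StrongDual ℝ X) with hz
      have hGz : G z = 0 := by
        have : G (y : StrongDual ℝ X) = 0 := y.2
        simp [hz, this]
      have hz1 : ‖z‖ ≤ 1 := by
        rw [hz, norm_smul, norm_inv, norm_norm, inv_mul_cancel₀ hyn.ne']
      have hmem : |z x| ∈ S := ⟨z, hGz, hz1, rfl⟩
      have hle : |z x| ≤ sSup S := le_csSup hbdd hmem
      have hzx : |z x| = ‖(y : StrongDual ℝ X)‖⁻¹ * |(y : StrongDual ℝ X) x| := by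
        simp [hz, abs_mul, abs_of_nonneg (inv_nonneg.2 hyn.le)]
      have hynorm : ‖y‖ = ‖(y : StrongDual ℝ X)‖ := rfl
      rw [hhy, Real.norm_eq_abs, hynorm]
      calc |(y : StrongDual ℝ X) x| = ‖(y : StrongDual ℝ X)‖ * |z x| := by
            rw [hzx]; field_simp
      _ ≤ ‖(y : StrongDual ℝ X)‖ * sSup S := by gcongr
      _ = sSup S * ‖(y : StrongDual ℝ X)‖ := mul_comm _ _
  -- Hahn-Banach extension
  obtain ⟨Ψ, hΨext, hΨnorm⟩ := exists_extension_norm_eq Y h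
  -- ι x - Ψ vanishes on ker G, hence equals t • G
  have hDker : ∀ f : StrongDual ℝ X, G f = 0 → (ι x - Ψ) f = 0 := by
    intro f hf
    have : Ψ f = h ⟨f, hf⟩ := hΨext ⟨f, hf⟩
    rw [ContinuousLinearMap.sub_apply, this, hhy]
    exact sub_self (f x)
  have hGne : ∃ g₀ : StrongDual ℝ X, G g₀ ≠ 0 := by
    by_contra hc
    push_neg at hc
    apply hG
    refine ⟨0, ?_⟩
    have : G = 0 := by ext f; simp [hc f]
    simp [this]
  obtain ⟨g₀, hg₀⟩ := hGne
  obtain ⟨t, hD⟩ : ∃ t : ℝ, ι x - Ψ = t • G := by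
    refine ⟨(ι x - Ψ) g₀ / G g₀, ?_⟩
    ext f
    have hker : G (f - (G f / G g₀) • g₀) = 0 := by
      simp [map_sub, map_smul, smul_eq_mul]
      field_simp
      ring
    have h0 := hDker _ hker
    simp only [map_sub, map_smul, smul_eq_mul, sub_eq_zero] at h0
    have : (ι x - Ψ) f = (G f / G g₀) * (ι x - Ψ) g₀ := h0
    rw [this]
    simp only [ContinuousLinearMap.smul_apply, smul_eq_mul]
    ring
  have hΨeq : ι x - t • G = Ψ := by rw [← hD, sub_sub_cancel]
  have hnx : ‖ι x‖ = ‖x‖ := (NormedSpace.inclusionInDoubleDualLi ℝ (E := X)).norm_map x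
  -- the key estimate
  have hkey : δ / (1 + δ) * ‖x‖ ≤ ‖ι x - t • G‖ := by
    rcases le_or_gt (|t|) (‖x‖ / (1 + δ)) with hcase | hcase
    · have h1 : ‖x‖ - |t| ≤ ‖ι x - t • G‖ := by
        have := norm_sub_norm_le (ι x) (t • G)
        rw [hnx, norm_smul, hG1, Real.norm_eq_abs, mul_one] at this
        linarith
      have : ‖x‖ - ‖x‖ / (1 + δ) ≤ ‖ι x - t • G‖ := by linarith
      have heq : ‖x‖ - ‖x‖ / (1 + δ) = δ / (1 + δ) * ‖x‖ := by
        field_simp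
        ring
      linarith [heq]
    · have ht0 : t ≠ 0 := by
        intro h0
        rw [h0, abs_zero] at hcase
        have : ‖x‖ / (1 + δ) ≥ 0 := by positivity
        linarith
      have hmem : ι (t⁻¹ • x) ∈ Set.range ι := ⟨t⁻¹ • x, rfl⟩
      have hdist : δ ≤ ‖G - t⁻¹ • ι x‖ := by
        have := Metric.infDist_le_dist_of_mem (x := G) hmem
        rw [show dist G (ι (t⁻¹ • x)) = ‖G - ι (t⁻¹ • x)‖ from dist_eq_norm G (ι (t⁻¹ • x))] at this
        rw [hδ]
        convert this using 2
        simp [map_smul]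
      have hsc : ι x - t • G = (-t) • (G - t⁻¹ • ι x) := by
        ext f
        simp only [ContinuousLinearMap.sub_apply, ContinuousLinearMap.smul_apply, smul_eq_mul]
        have ht : t * t⁻¹ = 1 := mul_inv_cancel₀ ht0
        linear_combination (-(ι x f)) * ht
      have : ‖ι x - t • G‖ = |t| * ‖G - t⁻¹ • ι x‖ := by
        rw [hsc, norm_smul, Real.norm_eq_abs, abs_neg]
      rw [this]
      have h2 : ‖x‖ / (1 + δ) * δ ≤ |t| * ‖G - t⁻¹ • ι x‖ := by
        apply mul_le_mul hcase.le hdist hδ0 (abs_nonneg t)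
      calc δ / (1 + δ) * ‖x‖ = ‖x‖ / (1 + δ) * δ := by ring
      _ ≤ _ := h2
  calc δ / (1 + δ) * ‖x‖ ≤ ‖ι x - t • G‖ := hkey
  _ = ‖Ψ‖ := by rw [hΨeq]
  _ = ‖h‖ := hΨnorm
  _ ≤ sSup S := hnormh
end

section
/- If (b_j) is a strongly summing basis for a Banach space B with biorthogonal functionals (b_j*), then the sequence of partial sums (∑_{j=1}^n b_j*)_{n=1}^∞ is a non-trivial weak-Cauchy sequence in B*; consequently B* is not weakly sequentially complete. -/
open Filter Finset

section Stmt7Aux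

variable {B : Type*} [NormedAddCommGroup B] [NormedSpace ℝ B]

/-- A weak-Cauchy sequence is norm-bounded. -/
lemma weakCauchy_bdd {b : ℕ → B}
    (h : ∀ f : B →L[ℝ] ℝ, ∃ L : ℝ, Tendsto (fun n => f (b n)) atTop (nhds L)) :
    ∃ M : ℝ, 0 ≤ M ∧ ∀ n, ‖b n‖ ≤ M := by
  have hptw : ∀ f : B →L[ℝ] ℝ, ∃ C, ∀ n,
      ‖(NormedSpace.inclusionInDoubleDual ℝ B (b n)) f‖ ≤ C := by
    intro f
    obtain ⟨L, hL⟩ := h f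
    obtain ⟨C, hC⟩ := hL.norm.bddAbove_range
    exact ⟨C, fun n => by simpa [NormedSpace.dual_def] using hC (Set.mem_range_self n)⟩
  obtain ⟨C', hC'⟩ := banach_steinhaus hptw
  refine ⟨max C' 0, le_max_right _ _, fun n => ?_⟩
  refine NormedSpace.norm_le_dual_bound ℝ (b n) (le_max_right _ _) fun f => ?_
  calc ‖f (b n)‖ = ‖(NormedSpace.inclusionInDoubleDual ℝ B (b n)) f‖ := by
        rw [NormedSpace.dual_def]
    _ ≤ ‖NormedSpace.inclusionInDoubleDual ℝ B (b n)‖ * ‖f‖ :=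
        ContinuousLinearMap.le_opNorm _ _
    _ ≤ max C' 0 * ‖f‖ := by
        gcongr
        exact le_max_of_le_left (hC' n)



variable {B : Type*} [NormedAddCommGroup B] [NormedSpace ℝ B]

/-- In a dense-span basic sequence with biorthogonal functionals, basis
projections are bounded by the basis constant. -/
lemma proj_bdd {b : ℕ → B} {b' : ℕ → (B →L[ℝ] ℝ)} {C : ℝ}
    (hbasis : ∀ (c : ℕ → ℝ) (m n : ℕ), m ≤ n →
      ‖∑ j ∈ Finset.range m, c j • b j‖ ≤ C * ‖∑ j ∈ Finset.range n, c j • b j‖)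
    (hspan : (Submodule.span ℝ (Set.range b)).topologicalClosure = ⊤)
    (hbio : ∀ i j, b' j (b i) = if i = j then (1 : ℝ) else 0)
    (n : ℕ) (x : B) : ‖∑ j ∈ Finset.range n, b' j x • b j‖ ≤ C * ‖x‖ := by
  set P : B →L[ℝ] B := ∑ j ∈ Finset.range n, (b' j).smulRight (b j) with hP
  have hPapp : ∀ y : B, P y = ∑ j ∈ Finset.range n, b' j y • b j := by
    intro y
    simp [hP, ContinuousLinearMap.sum_apply, ContinuousLinearMap.smulRight_apply]
  have hclosed : IsClosed {y : B | ‖P y‖ ≤ C * ‖y‖} :=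
    isClosed_le (P.continuous.norm) (continuous_const.mul continuous_norm)
  have hsub : (Submodule.span ℝ (Set.range b) : Set B) ⊆ {y : B | ‖P y‖ ≤ C * ‖y‖} := by
    intro y hy
    obtain ⟨c, hc⟩ := Finsupp.mem_span_range_iff_exists_finsupp.mp hy
    set m : ℕ := max n (c.support.sup id + 1) with hm
    have hnm : n ≤ m := le_max_left _ _
    have hy' : y = ∑ j ∈ Finset.range m, c j • b j := by
      rw [← hc]
      rw [Finsupp.sum_of_support_subset c _ (fun i a => a • b i) (fun i _ => by simp)]
      intro i hi
      have : i ≤ c.support.sup id := Finset.le_sup (f := id) hi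
      have h2 : c.support.sup id + 1 ≤ m := le_max_right _ _
      exact Finset.mem_range.mpr (by omega)
    have hcoord : ∀ j, j < m → b' j y = c j := by
      intro j hj
      rw [hy', map_sum]
      have : ∀ i ∈ Finset.range m, b' j (c i • b i) = if i = j then c i else 0 := by
        intro i _
        rw [map_smul, hbio]
        simp only [smul_eq_mul]
        split <;> simp
      rw [Finset.sum_congr rfl this, Finset.sum_ite_eq' (Finset.range m) j c]
      simp [hj]
    have hPy : P y = ∑ j ∈ Finset.range n, c j • b j := by
      rw [hPapp]
      refine Finset.sum_congr rfl fun j hj => ?_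
      rw [hcoord j (lt_of_lt_of_le (Finset.mem_range.mp hj) hnm)]
    show ‖P y‖ ≤ C * ‖y‖
    rw [hPy, hy']
    exact hbasis c n m hnm
  have hall : ∀ y : B, ‖P y‖ ≤ C * ‖y‖ := by
    intro y
    have hy : y ∈ closure (Submodule.span ℝ (Set.range b) : Set B) := by
      rw [← Submodule.topologicalClosure_coe, hspan]
      trivial
    exact closure_minimal hsub hclosed hy
  simpa [hPapp] using hall x



variable {B : Type*} [NormedAddCommGroup B] [NormedSpace ℝ B]

/-- Key bound: for any functional on the dual, partial sums of `F (b' j) • b j`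
are bounded by `C * ‖F‖`. -/
lemma dual_coeff_bdd {b : ℕ → B} {b' : ℕ → (B →L[ℝ] ℝ)} {C : ℝ} (hC0 : 0 ≤ C)
    (hproj : ∀ (n : ℕ) (x : B), ‖∑ j ∈ Finset.range n, b' j x • b j‖ ≤ C * ‖x‖)
    (F : (B →L[ℝ] ℝ) →L[ℝ] ℝ) (n : ℕ) :
    ‖∑ j ∈ Finset.range n, F (b' j) • b j‖ ≤ C * ‖F‖ := by
  refine NormedSpace.norm_le_dual_bound ℝ _ (mul_nonneg hC0 (norm_nonneg F)) fun f => ?_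
  set g : B →L[ℝ] ℝ := ∑ j ∈ Finset.range n, f (b j) • b' j with hg
  have hgnorm : ‖g‖ ≤ C * ‖f‖ := by
    refine ContinuousLinearMap.opNorm_le_bound _ (mul_nonneg hC0 (norm_nonneg f)) fun x => ?_
    have h1 : g x = f (∑ j ∈ Finset.range n, b' j x • b j) := by
      rw [map_sum]
      simp [hg, ContinuousLinearMap.sum_apply, mul_comm]
    rw [h1]
    calc ‖f (∑ j ∈ Finset.range n, b' j x • b j)‖
        ≤ ‖f‖ * ‖∑ j ∈ Finset.range n, b' j x • b j‖ := f.le_opNorm _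
      _ ≤ ‖f‖ * (C * ‖x‖) := by
          gcongr
          exact hproj n x
      _ = C * ‖f‖ * ‖x‖ := by ring
  have h2 : f (∑ j ∈ Finset.range n, F (b' j) • b j) = F g := by
    rw [map_sum, hg, map_sum]
    refine Finset.sum_congr rfl fun j _ => ?_
    simp [mul_comm]
  rw [h2]
  calc ‖F g‖ ≤ ‖F‖ * ‖g‖ := F.le_opNorm _
    _ ≤ ‖F‖ * (C * ‖f‖) := by gcongr
    _ = C * ‖F‖ * ‖f‖ := by ring

end Stmt7Aux

/-- if b is a strongly summing basis of B with biorthogonal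
functionals b', the partial sums of b' form a non-trivial weak-Cauchy sequence
in the dual; hence the dual is not weakly sequentially complete. -/
theorem stmt7 {B : Type*} [NormedAddCommGroup B] [NormedSpace ℝ B]
    (b : ℕ → B) (hb : StronglySumming b)
    (hspan : (Submodule.span ℝ (Set.range b)).topologicalClosure = ⊤)
    (b' : ℕ → (B →L[ℝ] ℝ))
    (hbio : ∀ i j, b' j (b i) = if i = j then (1 : ℝ) else 0) :
    WeakCauchy (fun n => ∑ j ∈ Finset.range n, b' j) ∧
    (¬ ∃ g : B →L[ℝ] ℝ, WeakConvTo (fun n => ∑ j ∈ Finset.range n, b' j) g) ∧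
    ¬ (∀ y : ℕ → (B →L[ℝ] ℝ), WeakCauchy y → ∃ g, WeakConvTo y g) := by
  obtain ⟨hWC, ⟨C, hC1, hbne, hbasis⟩, hSS⟩ := hb
  have hC0 : (0:ℝ) ≤ C := le_trans zero_le_one hC1
  obtain ⟨M, hM0, hMb⟩ := weakCauchy_bdd hWC
  have hproj := proj_bdd hbasis hspan hbio
  have hdb := dual_coeff_bdd hC0 hproj
  have hFsum : ∀ (F : (B →L[ℝ] ℝ) →L[ℝ] ℝ) (n : ℕ),
      F (∑ j ∈ Finset.range n, b' j) = ∑ j ∈ Finset.range n, F (b' j) :=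
    fun F n => map_sum F _ _
  have part1 : WeakCauchy (fun n => ∑ j ∈ Finset.range n, b' j) := by
    intro F
    obtain ⟨L, hL⟩ := hSS (fun j => F (b' j)) ⟨C * ‖F‖, fun n => hdb F n⟩
    refine ⟨L, ?_⟩
    have : (fun n => F (∑ j ∈ Finset.range n, b' j))
        = fun n => ∑ j ∈ Finset.range n, F (b' j) := funext fun n => hFsum F n
    rw [this]
    exact hL
  have part2 : ¬ ∃ g : B →L[ℝ] ℝ,
      WeakConvTo (fun n => ∑ j ∈ Finset.range n, b' j) g := by
    have hl : ∀ f : B →L[ℝ] ℝ, Tendsto (fun n => f (b n)) atTop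
        (nhds (hWC f).choose) := fun f => (hWC f).choose_spec
    set Lf : (B →L[ℝ] ℝ) → ℝ := fun f => (hWC f).choose with hLfdef
    have hadd : ∀ f g : B →L[ℝ] ℝ, Lf (f + g) = Lf f + Lf g := by
      intro f g
      refine tendsto_nhds_unique (hl (f + g)) ?_
      simpa using (hl f).add (hl g)
    have hsmul : ∀ (r : ℝ) (f : B →L[ℝ] ℝ), Lf (r • f) = r * Lf f := by
      intro r f
      refine tendsto_nhds_unique (hl (r • f)) ?_
      simpa using (hl f).const_mul r
    have hbnd : ∀ f : B →L[ℝ] ℝ, ‖Lf f‖ ≤ M * ‖f‖ := by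
      intro f
      refine le_of_tendsto (hl f).norm (Eventually.of_forall fun n => ?_)
      calc ‖f (b n)‖ ≤ ‖f‖ * ‖b n‖ := f.le_opNorm _
        _ ≤ ‖f‖ * M := by gcongr; exact hMb n
        _ = M * ‖f‖ := mul_comm _ _
    set F₀ : (B →L[ℝ] ℝ) →L[ℝ] ℝ := LinearMap.mkContinuous
      { toFun := Lf, map_add' := hadd,
        map_smul' := fun r f => by simpa using hsmul r f } M hbnd with hF₀def
    have hF₀app : ∀ f, F₀ f = Lf f := fun f => rfl
    have hF₀b' : ∀ j, F₀ (b' j) = 0 := by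
      intro j
      rw [hF₀app]
      refine tendsto_nhds_unique (hl (b' j)) ?_
      refine Tendsto.congr' ?_ tendsto_const_nhds
      filter_upwards [eventually_ge_atTop (j + 1)] with n hn
      rw [hbio]
      simp [Nat.ne_of_gt hn]
    rintro ⟨g, hg⟩
    have hgb : ∀ i, g (b i) = 1 := by
      intro i
      have h1 := hg (NormedSpace.inclusionInDoubleDual ℝ B (b i))
      simp only [NormedSpace.dual_def] at h1
      have htend1 : Tendsto (fun n => (∑ j ∈ Finset.range n, b' j) (b i))
          atTop (nhds 1) := by
        refine Tendsto.congr' ?_ tendsto_const_nhds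
        filter_upwards [eventually_ge_atTop (i + 1)] with n hn
        have heval : (∑ j ∈ Finset.range n, b' j) (b i)
            = ∑ j ∈ Finset.range n, b' j (b i) := by
          simp [ContinuousLinearMap.sum_apply]
        have h2 : ∀ j ∈ Finset.range n, b' j (b i) = if i = j then (1:ℝ) else 0 :=
          fun j _ => hbio i j
        rw [heval, Finset.sum_congr rfl h2,
          Finset.sum_ite_eq (Finset.range n) i (fun _ => (1:ℝ))]
        simp [Finset.mem_range.mpr (by omega : i < n)]
      exact tendsto_nhds_unique h1 htend1
    have hLg1 : Lf g = 1 := by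
      refine tendsto_nhds_unique (hl g) ?_
      simp only [hgb]
      exact tendsto_const_nhds
    have hLg0 : Lf g = 0 := by
      have h2 := hg F₀
      have h3 : ∀ n, F₀ (∑ j ∈ Finset.range n, b' j) = 0 := by
        intro n
        rw [hFsum]
        exact Finset.sum_eq_zero fun j _ => hF₀b' j
      have h4 : Tendsto (fun n => F₀ (∑ j ∈ Finset.range n, b' j)) atTop (nhds 0) := by
        simp only [h3]
        exact tendsto_const_nhds
      have := tendsto_nhds_unique h2 h4
      rw [← hF₀app g, this]
    rw [hLg1] at hLg0
    exact one_ne_zero hLg0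
  exact ⟨part1, part2, fun h => part2 (h _ part1)⟩
end

section
/- Every convex block basis of a strongly summing sequence is strongly summing. -/
open Filter Finset

section AuxStmt8

/-- Index of the block containing `i`. -/
noncomputable def blkIdx (n : ℕ → ℕ) (i : ℕ) : ℕ := sInf {j | i ≤ n (j + 1)}

lemma blk_nonempty {n : ℕ → ℕ} (hn : StrictMono n) (i : ℕ) :
    {j | i ≤ n (j + 1)}.Nonempty :=
  ⟨i, le_trans (Nat.le_succ i) hn.le_apply⟩

lemma le_blk {n : ℕ → ℕ} (hn : StrictMono n) (i : ℕ) : i ≤ n (blkIdx n i + 1) :=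
  Nat.sInf_mem (blk_nonempty hn i)

lemma blk_lt {n : ℕ → ℕ} (hn : StrictMono n) {i : ℕ} (h : n 0 < i) :
    n (blkIdx n i) < i := by
  rcases Nat.eq_zero_or_pos (blkIdx n i) with h0 | h0
  · rw [h0]; exact h
  · obtain ⟨j, hj⟩ := Nat.exists_eq_succ_of_ne_zero h0.ne'
    have hj' : j < blkIdx n i := by omega
    have : j ∉ {j | i ≤ n (j + 1)} := Nat.notMem_of_lt_sInf hj'
    simp only [Set.mem_setOf_eq, not_le] at this
    rwa [hj]

lemma blkIdx_eq {n : ℕ → ℕ} (hn : StrictMono n) {i j : ℕ}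
    (h1 : n j < i) (h2 : i ≤ n (j + 1)) : blkIdx n i = j := by
  refine le_antisymm (Nat.sInf_le h2) ?_
  by_contra hlt
  push_neg at hlt
  have : i ≤ n (blkIdx n i + 1) := le_blk hn i
  have : n (blkIdx n i + 1) ≤ n j := hn.monotone (by omega)
  omega

/-- Coefficients on the `x`-side corresponding to `y`-coefficients `c`. -/
noncomputable def dcoef (n : ℕ → ℕ) (l c : ℕ → ℝ) (i : ℕ) : ℝ :=
  if n 0 < i then c (blkIdx n i) * l i else 0

lemma dcoef_zero {n : ℕ → ℕ} {l c : ℕ → ℝ} {i : ℕ} (h : i ≤ n 0) :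
    dcoef n l c i = 0 := if_neg (not_lt.2 h)

lemma dcoef_eq {n : ℕ → ℕ} (hn : StrictMono n) {l c : ℕ → ℝ} {i j : ℕ}
    (h : i ∈ Finset.Ioc (n j) (n (j + 1))) : dcoef n l c i = c j * l i := by
  rw [Finset.mem_Ioc] at h
  have h0 : n 0 < i := lt_of_le_of_lt (hn.monotone (Nat.zero_le j)) h.1
  rw [dcoef, if_pos h0, blkIdx_eq hn h.1 h.2]

/-- Summing block-by-block. -/
lemma block_sum {M : Type*} [AddCommMonoid M] {n : ℕ → ℕ} (hn : StrictMono n)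
    (f : ℕ → M) (g : ℕ → M) (hf0 : ∀ i ≤ n 0, f i = 0)
    (hg : ∀ j, ∑ i ∈ Finset.Ioc (n j) (n (j + 1)), f i = g j) :
    ∀ m, ∑ i ∈ Finset.range (n m + 1), f i = ∑ j ∈ Finset.range m, g j := by
  intro m
  induction m with
  | zero =>
    simp only [Finset.range_zero, Finset.sum_empty]
    exact Finset.sum_eq_zero fun i hi => hf0 i (by simpa [Nat.lt_succ_iff] using Finset.mem_range.1 hi)
  | succ m ih =>
    have hle : n m < n (m + 1) := hn (by omega)
    have hsplit : Finset.range (n (m + 1) + 1) =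
        Finset.range (n m + 1) ∪ Finset.Ioc (n m) (n (m + 1)) := by
      ext i
      simp only [Finset.mem_range, Finset.mem_union, Finset.mem_Ioc]
      omega
    have hdisj : Disjoint (Finset.range (n m + 1)) (Finset.Ioc (n m) (n (m + 1))) := by
      rw [Finset.disjoint_left]
      intro i hi hi'
      rw [Finset.mem_range] at hi
      rw [Finset.mem_Ioc] at hi'
      omega
    rw [hsplit, Finset.sum_union hdisj, ih, hg, Finset.sum_range_succ]

end AuxStmt8
/-- every convex block basis of a strongly summing sequence is
strongly summing. -/
theorem stmt8 {X : Type*} [NormedAddCommGroup X] [NormedSpace ℝ X]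
    (x y : ℕ → X) (hx : StronglySumming x) (hy : ConvexBlockBasis y x) :
    StronglySumming y := by
  obtain ⟨hxwc, ⟨C, hC1, hxne, hC⟩, hxss⟩ := hx
  obtain ⟨n, l, hn, hl, hb⟩ := hy
  -- key identity for vectors
  have keyA : ∀ (c : ℕ → ℝ) (m : ℕ),
      ∑ i ∈ Finset.range (n m + 1), dcoef n l c i • x i
        = ∑ j ∈ Finset.range m, c j • y j := by
    intro c
    refine block_sum hn _ _ (fun i hi => by rw [dcoef_zero hi, zero_smul]) (fun j => ?_)
    calc ∑ i ∈ Finset.Ioc (n j) (n (j + 1)), dcoef n l c i • x i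
        = ∑ i ∈ Finset.Ioc (n j) (n (j + 1)), c j • (l i • x i) :=
          Finset.sum_congr rfl fun i hi => by rw [dcoef_eq hn hi, mul_smul]
      _ = c j • ∑ i ∈ Finset.Ioc (n j) (n (j + 1)), l i • x i := (Finset.smul_sum).symm
      _ = c j • y j := by rw [(hb j).2]
  -- key identity for scalars
  have keyC : ∀ (c : ℕ → ℝ) (m : ℕ),
      ∑ i ∈ Finset.range (n m + 1), dcoef n l c i = ∑ j ∈ Finset.range m, c j := by
    intro c
    refine block_sum hn _ _ (fun i hi => dcoef_zero hi) (fun j => ?_)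
    calc ∑ i ∈ Finset.Ioc (n j) (n (j + 1)), dcoef n l c i
        = ∑ i ∈ Finset.Ioc (n j) (n (j + 1)), c j * l i :=
          Finset.sum_congr rfl fun i hi => dcoef_eq hn hi
      _ = c j * ∑ i ∈ Finset.Ioc (n j) (n (j + 1)), l i := (Finset.mul_sum _ _ _).symm
      _ = c j := by rw [(hb j).1, mul_one]
  -- zero partial sums force zero coefficients
  have hzero : ∀ (d : ℕ → ℝ) (N : ℕ), ∑ i ∈ Finset.range N, d i • x i = 0 →
      ∀ i < N, d i = 0 := by
    intro d N hN
    have hm : ∀ m ≤ N, ∑ i ∈ Finset.range m, d i • x i = 0 := by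
      intro m hm
      have h := hC d m N hm
      rw [hN, norm_zero, mul_zero] at h
      exact norm_le_zero_iff.1 h
    intro i hi
    have h1 := hm (i + 1) hi
    have h2 := hm i hi.le
    rw [Finset.sum_range_succ, h2, zero_add] at h1
    exact (smul_eq_zero.1 h1).resolve_right (hxne i)
  refine ⟨?_, ⟨C, hC1, ?_, ?_⟩, ?_⟩
  · -- WeakCauchy y
    intro f
    obtain ⟨L, hL⟩ := hxwc f
    refine ⟨L, Metric.tendsto_atTop.2 fun ε hε => ?_⟩
    obtain ⟨N, hN⟩ := Metric.tendsto_atTop.1 hL (ε / 2) (by linarith)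
    refine ⟨N, fun j hj => ?_⟩
    have hyj : f (y j) = ∑ i ∈ Finset.Ioc (n j) (n (j + 1)), l i * f (x i) := by
      rw [(hb j).2, map_sum]
      simp [smul_eq_mul]
    have heq : f (y j) - L = ∑ i ∈ Finset.Ioc (n j) (n (j + 1)), l i * (f (x i) - L) := by
      simp only [mul_sub]
      rw [Finset.sum_sub_distrib, ← Finset.sum_mul, (hb j).1, one_mul, hyj]
    rw [Real.dist_eq, heq]
    calc |∑ i ∈ Finset.Ioc (n j) (n (j + 1)), l i * (f (x i) - L)|
        ≤ ∑ i ∈ Finset.Ioc (n j) (n (j + 1)), |l i * (f (x i) - L)| :=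
          Finset.abs_sum_le_sum_abs _ _
      _ ≤ ∑ i ∈ Finset.Ioc (n j) (n (j + 1)), l i * (ε / 2) := by
          refine Finset.sum_le_sum fun i hi => ?_
          rw [abs_mul, abs_of_nonneg (hl i)]
          refine mul_le_mul_of_nonneg_left ?_ (hl i)
          have hNi : N ≤ i := by
            have h1 : n j < i := (Finset.mem_Ioc.1 hi).1
            have h2 : j ≤ n j := hn.le_apply
            omega
          have := hN i hNi
          rw [Real.dist_eq] at this
          exact this.le
      _ = ε / 2 := by rw [← Finset.sum_mul, (hb j).1, one_mul]
      _ < ε := by linarith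
  · -- y j ≠ 0
    intro j hj0
    set c : ℕ → ℝ := fun j' => if j' = j then 1 else 0 with hc
    have hsum : ∑ j' ∈ Finset.range (j + 1), c j' • y j' = 0 := by
      rw [Finset.sum_eq_single_of_mem j (Finset.mem_range.2 (Nat.lt_succ_self j))]
      · simp [hc, hj0]
      · intro b _ hbj; simp [hc, hbj]
    have hx0 : ∑ i ∈ Finset.range (n (j + 1) + 1), dcoef n l c i • x i = 0 := by
      rw [keyA c (j + 1), hsum]
    obtain ⟨i, hi, hli⟩ := Finset.exists_ne_zero_of_sum_ne_zero
      (s := Finset.Ioc (n j) (n (j + 1))) (f := l) (by rw [(hb j).1]; exact one_ne_zero)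
    have hiN : i < n (j + 1) + 1 := by
      have := (Finset.mem_Ioc.1 hi).2; omega
    have hdi := hzero _ _ hx0 i hiN
    rw [dcoef_eq hn hi] at hdi
    simp only [hc, if_pos rfl, one_mul] at hdi
    exact hli hdi
  · -- basis constant
    intro c m m' hmm'
    rw [← keyA c m, ← keyA c m']
    exact hC _ (n m + 1) (n m' + 1) (by have := hn.monotone hmm'; omega)
  · -- strongly summing property
    rintro c ⟨M, hM⟩
    have hbdd : BoundedPartialSums (dcoef n l c) x := by
      refine ⟨C * M, fun N => ?_⟩
      calc ‖∑ i ∈ Finset.range N, dcoef n l c i • x i‖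
          ≤ C * ‖∑ i ∈ Finset.range (n N + 1), dcoef n l c i • x i‖ :=
            hC _ N (n N + 1) (by have : N ≤ n N := hn.le_apply; omega)
        _ = C * ‖∑ j ∈ Finset.range N, c j • y j‖ := by rw [keyA]
        _ ≤ C * M := mul_le_mul_of_nonneg_left (hM N) (by linarith)
    obtain ⟨L, hL⟩ := hxss _ hbdd
    refine ⟨L, ?_⟩
    have hfe : (fun m => ∑ j ∈ Finset.range m, c j)
        = (fun N => ∑ i ∈ Finset.range N, dcoef n l c i) ∘ (fun m => n m + 1) :=
      funext fun m => (keyC c m).symm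
    rw [hfe]
    exact hL.comp (tendsto_atTop_mono
      (fun m => by have : m ≤ n m := hn.le_apply; simp only [id_eq]; omega) tendsto_id)
end

section
/- Let (e_j) be a (c)-sequence in a Banach space. Then (e_j) is (c.c.) if and only if for every sequence of scalars (c_j) with c_j = 0 for infinitely many j and sup_n ||∑_{j=1}^n c_j e_j|| < ∞, one has c_j → 0. -/
open Filter Finset

lemma weakCauchy_bounded' {X : Type*} [NormedAddCommGroup X] [NormedSpace ℝ X]
    {b : ℕ → X} (h : WeakCauchy b) : ∃ B : ℝ, ∀ n, ‖b n‖ ≤ B := by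
  have key : ∀ f : StrongDual ℝ X, ∃ C, ∀ n,
      ‖(NormedSpace.inclusionInDoubleDualLi ℝ (b n) :
        StrongDual ℝ (StrongDual ℝ X)) f‖ ≤ C := by
    intro f
    obtain ⟨L, hL⟩ := h f
    obtain ⟨C, hC⟩ := (hL.norm).bddAbove_range
    refine ⟨C, fun n => ?_⟩
    simpa [NormedSpace.inclusionInDoubleDualLi] using hC (Set.mem_range_self n)
  obtain ⟨C', hC'⟩ := banach_steinhaus key
  refine ⟨C', fun n => ?_⟩
  have := (NormedSpace.inclusionInDoubleDualLi ℝ (E := X)).norm_map (b n)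
  rw [← this]; exact hC' n

/-- a (c)-sequence is (c.c.) iff every scalar sequence vanishing
infinitely often with bounded partial sums tends to zero. -/
theorem stmt9 {X : Type*} [NormedAddCommGroup X] [NormedSpace ℝ X]
    (e : ℕ → X) (he : IsCSeq e) :
    IsCC e ↔
      ∀ c : ℕ → ℝ, (∀ N, ∃ j ≥ N, c j = 0) → BoundedPartialSums c e →
        Filter.Tendsto c Filter.atTop (nhds 0) := by
  classical
  constructor
  · -- forward
    rintro ⟨_, _, hconv⟩ c hc0 hbdd
    obtain ⟨L, hL⟩ := hconv c hbdd
    have hL0 : L = 0 := by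
      by_contra hne
      have hpos : 0 < |L| := abs_pos.mpr hne
      obtain ⟨N, hN⟩ := Metric.tendsto_atTop.mp hL |L| hpos
      obtain ⟨j, hjN, hj0⟩ := hc0 N
      have := hN j hjN
      rw [Real.dist_eq, hj0] at this
      simp at this
    rwa [hL0] at hL
  · -- backward
    intro H
    obtain ⟨hsn, hbasic, hwc⟩ := he
    refine ⟨hbasic, hwc, ?_⟩
    rintro c ⟨M, hM⟩
    obtain ⟨B, hB⟩ := weakCauchy_bounded' hwc
    obtain ⟨a, A, ha, haA⟩ := hsn
    have hA0 : (0:ℝ) ≤ A := le_trans (norm_nonneg (e 0)) (haA 0).2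
    have hM0 : (0:ℝ) ≤ M := le_trans (norm_nonneg _) (hM 0)
    -- c is bounded
    have hcb : ∀ j, c j ∈ Set.Icc (-(2*M/a)) (2*M/a) := by
      intro j
      have h1 : ‖c j • e j‖ ≤ 2*M := by
        have : c j • e j = (∑ i ∈ Finset.range (j+1), c i • e i)
            - ∑ i ∈ Finset.range j, c i • e i := by
          rw [Finset.sum_range_succ]; abel
        rw [this]
        calc ‖_ - _‖ ≤ ‖∑ i ∈ Finset.range (j+1), c i • e i‖
              + ‖∑ i ∈ Finset.range j, c i • e i‖ := norm_sub_le _ _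
          _ ≤ M + M := add_le_add (hM _) (hM _)
          _ = 2*M := by ring
      have h2 : |c j| * a ≤ 2*M := by
        calc |c j| * a ≤ |c j| * ‖e j‖ :=
              mul_le_mul_of_nonneg_left (haA j).1 (abs_nonneg _)
          _ = ‖c j • e j‖ := by rw [norm_smul, Real.norm_eq_abs]
          _ ≤ 2*M := h1
      have h3 : |c j| ≤ 2*M/a := (le_div_iff₀ ha).mpr h2
      exact abs_le.mp h3
    obtain ⟨t, -, φ, hφ, hφt⟩ :=
      tendsto_subseq_of_bounded (Metric.isBounded_Icc _ _) hcb
    -- fast subsequence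
    have hev : ∀ k : ℕ, ∃ N, ∀ n ≥ N, |c (φ n) - t| ≤ (1/2:ℝ)^k := by
      intro k
      have hk : (0:ℝ) < (1/2)^k := by positivity
      obtain ⟨N, hN⟩ := Metric.tendsto_atTop.mp hφt ((1/2)^k) hk
      exact ⟨N, fun n hn => le_of_lt (by simpa [Real.dist_eq] using hN n hn)⟩
    obtain ⟨θ, hθ, hθP⟩ := extraction_forall_of_eventually' hev
    set ψ : ℕ → ℕ := φ ∘ θ with hψdef
    have hψ : StrictMono ψ := hφ.comp hθ
    have hψP : ∀ k, |c (ψ k) - t| ≤ (1/2:ℝ)^k := hθP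
    set d : ℕ → ℝ := fun j => if ∃ k, ψ k = j then 0 else c j - t with hd
    have hd0 : ∀ N, ∃ j ≥ N, d j = 0 := by
      intro N
      exact ⟨ψ N, hψ.le_apply, by simp only [hd]; exact if_pos ⟨N, rfl⟩⟩
    -- bounded partial sums of d
    have hbd : BoundedPartialSums d e := by
      refine ⟨M + |t| * B + 2 * A, fun n => ?_⟩
      have hsplit : ∑ j ∈ Finset.range n, d j • e j
          = (∑ j ∈ Finset.range n, (c j - t) • e j)
            - ∑ j ∈ Finset.range n, (if ∃ k, ψ k = j then (c j - t) else 0) • e j := by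
        rw [← Finset.sum_sub_distrib]
        refine Finset.sum_congr rfl fun j _ => ?_
        by_cases hj : ∃ k, ψ k = j
        · simp [hd, hj, sub_smul]
        · simp [hd, hj]
      have h1 : ‖∑ j ∈ Finset.range n, (c j - t) • e j‖ ≤ M + |t| * B := by
        have : ∑ j ∈ Finset.range n, (c j - t) • e j
            = (∑ j ∈ Finset.range n, c j • e j) - t • partialSums e n := by
          simp only [sub_smul, Finset.sum_sub_distrib, partialSums, Finset.smul_sum]
        rw [this]
        calc ‖_ - _‖ ≤ ‖∑ j ∈ Finset.range n, c j • e j‖ + ‖t • partialSums e n‖ :=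
              norm_sub_le _ _
          _ ≤ M + |t| * B := by
              refine add_le_add (hM n) ?_
              rw [norm_smul, Real.norm_eq_abs]
              exact mul_le_mul_of_nonneg_left (hB n) (abs_nonneg _)
      have h2 : ‖∑ j ∈ Finset.range n, (if ∃ k, ψ k = j then (c j - t) else 0) • e j‖
          ≤ 2 * A := by
        set g : ℕ → ℝ := fun j => ‖(if ∃ k, ψ k = j then (c j - t) else 0) • e j‖ with hg
        calc ‖∑ j ∈ Finset.range n, (if ∃ k, ψ k = j then (c j - t) else 0) • e j‖
            ≤ ∑ j ∈ Finset.range n, g j := norm_sum_le _ _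
          _ = ∑ j ∈ (Finset.range n).filter (fun j => ∃ k, ψ k = j), g j := by
              rw [Finset.sum_filter_of_ne]
              intro j _ hgj
              by_contra hj
              exact hgj (by simp [hg, hj])
          _ ≤ ∑ j ∈ (Finset.range n).image ψ, g j := by
              refine Finset.sum_le_sum_of_subset_of_nonneg ?_ (fun j _ _ => norm_nonneg _)
              intro j hj
              rw [Finset.mem_filter] at hj
              obtain ⟨hjn, k, hk⟩ := hj
              refine Finset.mem_image.mpr ⟨k, Finset.mem_range.mpr ?_, hk⟩
              calc k ≤ ψ k := hψ.le_apply
                _ < n := by rw [hk]; exact Finset.mem_range.mp hjn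
          _ = ∑ k ∈ Finset.range n, g (ψ k) :=
              Finset.sum_image (fun i _ j _ h => hψ.injective h)
          _ ≤ ∑ k ∈ Finset.range n, (1/2:ℝ)^k * A := by
              refine Finset.sum_le_sum fun k _ => ?_
              have : g (ψ k) = |c (ψ k) - t| * ‖e (ψ k)‖ := by
                have hc : ∃ k', ψ k' = ψ k := ⟨k, rfl⟩
                simp only [hg, norm_smul, Real.norm_eq_abs, if_pos hc]
              rw [this]
              exact mul_le_mul (hψP k) (haA _).2 (norm_nonneg _) (by positivity)
          _ = (∑ k ∈ Finset.range n, (1/2:ℝ)^k) * A := by rw [Finset.sum_mul]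
          _ ≤ 2 * A := mul_le_mul_of_nonneg_right (sum_geometric_two_le n) hA0
      rw [hsplit]
      calc ‖_ - _‖ ≤ ‖∑ j ∈ Finset.range n, (c j - t) • e j‖
            + ‖∑ j ∈ Finset.range n, (if ∃ k, ψ k = j then (c j - t) else 0) • e j‖ :=
            norm_sub_le _ _
        _ ≤ (M + |t| * B) + 2 * A := add_le_add h1 h2
    have hdt : Tendsto d atTop (nhds 0) := H d hd0 hbd
    -- conclude c → t
    refine ⟨t, Metric.tendsto_atTop.mpr fun ε hε => ?_⟩
    obtain ⟨N1, hN1⟩ := Metric.tendsto_atTop.mp hdt ε hε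
    obtain ⟨K, hK⟩ := exists_pow_lt_of_lt_one hε (by norm_num : (1/2:ℝ) < 1)
    refine ⟨max N1 (ψ K), fun j hj => ?_⟩
    rw [Real.dist_eq]
    by_cases hjr : ∃ k, ψ k = j
    · obtain ⟨k, rfl⟩ := hjr
      have hkK : K ≤ k := hψ.le_iff_le.mp (le_trans (le_max_right N1 (ψ K)) hj)
      calc |c (ψ k) - t| ≤ (1/2:ℝ)^k := hψP k
        _ ≤ (1/2:ℝ)^K := pow_le_pow_of_le_one (by norm_num) (by norm_num) hkK
        _ < ε := hK
    · have := hN1 j (le_trans (le_max_left N1 (ψ K)) hj)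
      rw [Real.dist_eq, sub_zero] at this
      simpa [hd, hjr] using this
end
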